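/- arXiv:1504.05706 — 10 statements merged into one kernel-verified Lean document; each statement's English description precedes it below -/
import Mathlib

section
/- Let f : ℕ → [0,∞) with f(0) > f(k) for k ≥ 1, a > 0, and let (x_k) be a quasispecies associated to f. Then for every k ≥ 1, f(k) = (f(0)/x_k) · ∑_{j=0}^{k} (−1)^j (a^j/j!) x_{k−j}. -/
/-!
Evaluating the stationarity equation at `k = 0` gives `Φ = f(0) e^{-a}`, after which it says that
the sequence `(x_j f(j))` convolved with the Poisson weights `a^n / n!` is `f(0) · x`. For the
generating series `Y = ∑ x_j f(j) T^j` and `S = ∑ x_j T^j` this reads `Y · e^{aT} = f(0) · S`, so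
`Y = f(0) · e^{-aT} · S`, which is the formula once we divide by `x_k`; that `x_k > 0` comes from
the term `j = 0` of the convolution.
-/

open Finset

namespace PowerSeries

theorem coeff_mk_mul_mk {R : Type*} [CommSemiring R] (u v : ℕ → R) (k : ℕ) :
    coeff k (mk u * mk v) = ∑ j ∈ range (k + 1), u j * v (k - j) := by
  rw [coeff_mul,
    Nat.sum_antidiagonal_eq_sum_range_succ (fun i j => coeff i (mk u) * coeff j (mk v))]
  simp only [coeff_mk]

variable {K : Type*} [Field K] [CharZero K]

theorem rescale_exp_eq_mk (a : K) : rescale a (exp K) = mk fun n => a ^ n / n.factorial := by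
  ext n
  simp [coeff_rescale, coeff_exp, div_eq_mul_inv]

theorem rescale_exp_mul_rescale_exp_neg (a : K) :
    rescale a (exp K) * rescale (-a) (exp K) = 1 := by
  rw [exp_mul_exp_eq_exp_add, add_neg_cancel, rescale_zero, RingHom.comp_apply,
    constantCoeff_exp, map_one]

end PowerSeries

open PowerSeries in
theorem eq_mul_sum_of_sum_mul_pow_div_factorial_eq {K : Type*} [Field K] [CharZero K]
    (a c : K) {x y : ℕ → K}
    (h : ∀ k, ∑ j ∈ range (k + 1), y j * (a ^ (k - j) / (k - j).factorial) = c * x k) (k : ℕ) :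
    y k = c * ∑ j ∈ range (k + 1), (-1) ^ j * a ^ j / j.factorial * x (k - j) := by
  have hconv : mk y * rescale a (exp K) = C c * mk x := by
    ext n
    rw [rescale_exp_eq_mk, coeff_mk_mul_mk, h, coeff_C_mul, coeff_mk]
  have hdeconv : mk y = C c * (rescale (-a) (exp K) * mk x) := by
    rw [← mul_one (mk y), ← rescale_exp_mul_rescale_exp_neg a, ← mul_assoc, hconv]
    ring
  rw [← coeff_mk k y, hdeconv, coeff_C_mul, rescale_exp_eq_mk, coeff_mk_mul_mk]
  congr 1
  exact sum_congr rfl fun j _ => by rw [neg_pow a]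

theorem pos_of_sum_mul_pow_div_factorial_eq {a c : ℝ} {x y : ℕ → ℝ} (ha : 0 < a) (hc : 0 < c)
    (hy : ∀ j, 0 ≤ y j) (hy0 : 0 < y 0)
    (h : ∀ k, ∑ j ∈ range (k + 1), y j * (a ^ (k - j) / (k - j).factorial) = c * x k) (k : ℕ) :
    0 < x k := by
  have hfirst : 0 < y 0 * (a ^ (k - 0) / (k - 0).factorial) := by positivity
  have hle : y 0 * (a ^ (k - 0) / (k - 0).factorial) ≤ c * x k := by
    rw [← h k]
    refine single_le_sum (f := fun j => y j * (a ^ (k - j) / (k - j).factorial))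
      (fun j _ => ?_) (mem_range.mpr k.succ_pos)
    have := hy j
    positivity
  exact pos_of_mul_pos_right (hfirst.trans_le hle) hc.le

theorem quasispecies_fitness_formula_general
    (f : ℕ → ℝ) (hf0 : ∀ k, 0 ≤ f k) (hf : ∀ k, 1 ≤ k → f k < f 0)
    (a : ℝ) (ha : 0 < a)
    (x : ℕ → ℝ) (hx0 : ∀ k, 0 ≤ x k) (hxpos : 0 < x 0)
    (hstat : ∀ k, ∑ j ∈ Finset.range (k + 1),
        x j * f j * Real.exp (-a) * a ^ (k - j) / (Nat.factorial (k - j))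
      = x k * ∑' j, x j * f j) :
    ∀ k, 1 ≤ k →
      f k = f 0 / x k *
        ∑ j ∈ Finset.range (k + 1),
          (-1 : ℝ) ^ j * a ^ j / (Nat.factorial j) * x (k - j) := by
  intro k _
  have hf0pos : 0 < f 0 := (hf0 1).trans_lt (hf 1 le_rfl)
  have hmean : ∑' j, x j * f j = f 0 * Real.exp (-a) := by
    have h0 := hstat 0
    simp only [zero_add, sum_range_one, Nat.sub_self, pow_zero, Nat.factorial_zero,
      Nat.cast_one, div_one, mul_one] at h0
    exact (mul_left_cancel₀ hxpos.ne' (by rw [← h0]; ring)).symm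
  have hconv : ∀ k, ∑ j ∈ range (k + 1), x j * f j * (a ^ (k - j) / (k - j).factorial)
      = f 0 * x k := by
    intro k
    have hfactor : ∑ j ∈ range (k + 1),
        x j * f j * Real.exp (-a) * a ^ (k - j) / (k - j).factorial
        = Real.exp (-a) *
          ∑ j ∈ range (k + 1), x j * f j * (a ^ (k - j) / (k - j).factorial) := by
      rw [mul_sum]
      exact sum_congr rfl fun j _ => by ring
    refine mul_left_cancel₀ (Real.exp_pos (-a)).ne' ?_
    rw [← hfactor, hstat k, hmean]
    ring
  have hxk := pos_of_sum_mul_pow_div_factorial_eq ha hf0pos (fun j => mul_nonneg (hx0 j) (hf0 j))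
    (mul_pos hxpos hf0pos) hconv k
  rw [div_mul_eq_mul_div, eq_div_iff hxk.ne',
    ← eq_mul_sum_of_sum_mul_pow_div_factorial_eq a _ hconv k]
  ring

theorem quasispecies_fitness_formula
    (f : ℕ → ℝ) (hf0 : ∀ k, 0 ≤ f k) (hf : ∀ k, 1 ≤ k → f k < f 0)
    (a : ℝ) (ha : 0 < a)
    (x : ℕ → ℝ) (hx0 : ∀ k, 0 ≤ x k) (hxpos : 0 < x 0)
    (hsum : ∑' k, x k = 1)
    (hΦ : Summable (fun j => x j * f j))
    (hstat : ∀ k, ∑ j ∈ Finset.range (k + 1),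
        x j * f j * Real.exp (-a) * a ^ (k - j) / (Nat.factorial (k - j))
      = x k * ∑' j, x j * f j) :
    ∀ k, 1 ≤ k →
      f k = f 0 / x k *
        ∑ j ∈ Finset.range (k + 1),
          (-1 : ℝ) ^ j * a ^ j / (Nat.factorial j) * x (k - j) :=
  quasispecies_fitness_formula_general f hf0 hf a ha x hx0 hxpos hstat
end

section
/- Let f : ℕ → [0,∞) with f(0) > f(k) for all k ≥ 1, a > 0, and let (y_k) be defined by y_0 = 1 and y_k = (1/(f(0)−f(k))) ∑_{j=0}^{k−1} y_j f(j) a^{k−j}/(k−j)! for k ≥ 1. If ∑_{k≥0} y_k converges, then setting x_0 = (∑_{k≥0} y_k)^{−1} and x_k = x_0 y_k, the sequence (x_k) is the unique quasispecies associated to f. -/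
open Finset

/-- `x` is a quasispecies associated to the fitness function `f`
    (with parameter `a`). -/
def IsQuasispecies (f : ℕ → ℝ) (a : ℝ) (x : ℕ → ℝ) : Prop :=
  (∀ k, 0 ≤ x k) ∧ 0 < x 0 ∧ (∑' k, x k) = 1 ∧
  Summable (fun j => x j * f j) ∧
  ∀ k, ∑ j ∈ Finset.range (k + 1),
      x j * f j * Real.exp (-a) * a ^ (k - j) / (Nat.factorial (k - j))
    = x k * ∑' j, x j * f j

theorem quasispecies_of_summable
    (f : ℕ → ℝ) (hf0 : ∀ k, 0 ≤ f k) (hf : ∀ k, 1 ≤ k → f k < f 0)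
    (a : ℝ) (ha : 0 < a)
    (y : ℕ → ℝ) (hy0 : y 0 = 1)
    (hy : ∀ k, 1 ≤ k →
      y k = (1 / (f 0 - f k)) *
        ∑ j ∈ Finset.range k, y j * f j * a ^ (k - j) / (Nat.factorial (k - j)))
    (hsum : Summable y) :
    IsQuasispecies f a (fun k => (∑' n, y n)⁻¹ * y k) ∧
    ∀ x, IsQuasispecies f a x → x = fun k => (∑' n, y n)⁻¹ * y k := by
  set S := ∑' n, y n with hSdef
  -- nonnegativity of y
  have hyn : ∀ k, 0 ≤ y k := by
    intro k
    induction k using Nat.strong_induction_on with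
    | _ k IH =>
      rcases Nat.eq_zero_or_pos k with hk | hk
      · simp [hk, hy0]
      · rw [hy k hk]
        apply mul_nonneg
        · have := sub_pos.mpr (hf k hk)
          positivity
        · apply Finset.sum_nonneg
          intro j hj
          have hj' := IH j (Finset.mem_range.mp hj)
          exact div_nonneg (mul_nonneg (mul_nonneg hj' (hf0 j)) (pow_nonneg ha.le _))
            (Nat.cast_nonneg _)
  have hfk : ∀ k, f k ≤ f 0 := by
    intro k
    rcases Nat.eq_zero_or_pos k with hk | hk
    · simp [hk]
    · exact (hf k hk).le
  have hS1 : (1 : ℝ) ≤ S := by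
    have := Summable.le_tsum hsum 0 (fun i _ => hyn i)
    rwa [hy0] at this
  have hSpos : 0 < S := lt_of_lt_of_le one_pos hS1
  have hSne : S ≠ 0 := hSpos.ne'
  -- key identity (*)
  have star : ∀ k, ∑ j ∈ Finset.range (k + 1),
      y j * f j * a ^ (k - j) / (Nat.factorial (k - j)) = f 0 * y k := by
    intro k
    rcases Nat.eq_zero_or_pos k with hk | hk
    · subst hk; simp [hy0]
    · have hne : f 0 - f k ≠ 0 := sub_ne_zero.mpr (hf k hk).ne'
      have h := hy k hk
      have h2 : ∑ j ∈ Finset.range k, y j * f j * a ^ (k - j) / (Nat.factorial (k - j))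
          = (f 0 - f k) * y k := by
        rw [h]; field_simp
      rw [Finset.sum_range_succ, h2]
      simp [Nat.sub_self]
      ring
  -- summability of y * f
  have hTsum : Summable (fun j => y j * f j) := by
    apply Summable.of_nonneg_of_le (fun j => mul_nonneg (hyn j) (hf0 j))
      (fun j => ?_) (hsum.mul_left (f 0))
    calc y j * f j ≤ y j * f 0 := mul_le_mul_of_nonneg_left (hfk j) (hyn j)
      _ = f 0 * y j := mul_comm _ _
  have hexp : (∑' n : ℕ, a ^ n / (Nat.factorial n)) = Real.exp a := by
    rw [Real.exp_eq_exp_ℝ, NormedSpace.exp_eq_tsum_div]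
  -- Cauchy product
  have hcauchy : (∑' j, y j * f j) * Real.exp a = f 0 * S := by
    have hn1 : Summable (fun j => ‖y j * f j‖) := by
      have : (fun j => ‖y j * f j‖) = fun j => y j * f j := by
        funext j; exact Real.norm_of_nonneg (mul_nonneg (hyn j) (hf0 j))
      rw [this]; exact hTsum
    have hn2 : Summable (fun n : ℕ => ‖a ^ n / (Nat.factorial n : ℝ)‖) := by
      have : (fun n : ℕ => ‖a ^ n / (Nat.factorial n : ℝ)‖)
          = fun n : ℕ => a ^ n / (Nat.factorial n : ℝ) := by
        funext n
        have : (0:ℝ) ≤ a ^ n / (Nat.factorial n : ℝ) := by positivity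
        exact Real.norm_of_nonneg this
      rw [this]; exact Real.summable_pow_div_factorial a
    calc (∑' j, y j * f j) * Real.exp a
        = (∑' j, y j * f j) * (∑' n : ℕ, a ^ n / (Nat.factorial n)) := by rw [hexp]
      _ = ∑' k, ∑ j ∈ Finset.range (k + 1),
            (y j * f j) * (a ^ (k - j) / (Nat.factorial (k - j))) :=
          tsum_mul_tsum_eq_tsum_sum_range_of_summable_norm hn1 hn2
      _ = ∑' k, f 0 * y k := by
          apply tsum_congr
          intro k
          rw [← star k]
          exact Finset.sum_congr rfl fun j _ => by ring
      _ = f 0 * S := tsum_mul_left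
  have hT : (∑' j, y j * f j) = f 0 * S * Real.exp (-a) := by
    have he := Real.exp_ne_zero a
    rw [Real.exp_neg]
    field_simp
    linarith [hcauchy]
  -- the value of the tsum for x
  have hxT : (∑' j, ((S⁻¹ * y j) * f j)) = f 0 * Real.exp (-a) := by
    have : (fun j => (S⁻¹ * y j) * f j) = fun j => S⁻¹ * (y j * f j) := by
      funext j; ring
    rw [this, tsum_mul_left, hT]
    field_simp
  have hxsummable : Summable (fun j => (S⁻¹ * y j) * f j) := by
    have : (fun j => (S⁻¹ * y j) * f j) = fun j => S⁻¹ * (y j * f j) := by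
      funext j; ring
    rw [this]; exact hTsum.mul_left _
  constructor
  · refine ⟨fun k => mul_nonneg (by positivity) (hyn k), ?_, ?_, hxsummable, ?_⟩
    · simp only [hy0, mul_one]
      positivity
    · rw [tsum_mul_left, inv_mul_cancel₀ hSne]
    · intro k
      calc ∑ j ∈ Finset.range (k + 1),
            (S⁻¹ * y j) * f j * Real.exp (-a) * a ^ (k - j) / (Nat.factorial (k - j))
          = S⁻¹ * Real.exp (-a) * ∑ j ∈ Finset.range (k + 1),
              y j * f j * a ^ (k - j) / (Nat.factorial (k - j)) := by
            rw [Finset.mul_sum]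
            exact Finset.sum_congr rfl fun j _ => by ring
        _ = S⁻¹ * Real.exp (-a) * (f 0 * y k) := by rw [star k]
        _ = (S⁻¹ * y k) * ∑' j, ((S⁻¹ * y j) * f j) := by rw [hxT]; ring
  · rintro x ⟨hxnn, hx0, hxsum1, hxS, hxeq⟩
    have hE := Real.exp_ne_zero (-a)
    -- determine the tsum value
    have hTx : (∑' j, x j * f j) = f 0 * Real.exp (-a) := by
      have h0 := hxeq 0
      simp [Nat.factorial] at h0
      have : x 0 * (∑' j, x j * f j) = x 0 * (f 0 * Real.exp (-a)) := by
        rw [← h0]; ring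
      exact mul_left_cancel₀ hx0.ne' this
    -- x k = x 0 * y k by strong induction
    have hind : ∀ k, x k = x 0 * y k := by
      intro k
      induction k using Nat.strong_induction_on with
      | _ k IH =>
        rcases Nat.eq_zero_or_pos k with hk | hk
        · subst hk; simp [hy0]
        · have hne : f 0 - f k ≠ 0 := sub_ne_zero.mpr (hf k hk).ne'
          have h1 := hxeq k
          rw [hTx, Finset.sum_range_succ] at h1
          have h2 : ∑ j ∈ Finset.range k,
              x j * f j * Real.exp (-a) * a ^ (k - j) / (Nat.factorial (k - j))
              = (x 0 * Real.exp (-a)) * ∑ j ∈ Finset.range k,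
                  y j * f j * a ^ (k - j) / (Nat.factorial (k - j)) := by
            rw [Finset.mul_sum]
            apply Finset.sum_congr rfl
            intro j hj
            rw [IH j (Finset.mem_range.mp hj)]
            ring
          have h3 : ∑ j ∈ Finset.range k, y j * f j * a ^ (k - j) / (Nat.factorial (k - j))
              = (f 0 - f k) * y k := by
            rw [hy k hk]; field_simp
          rw [h2, h3] at h1
          simp [Nat.sub_self] at h1
          have key : ((f 0 - f k) * Real.exp (-a)) * x k
              = ((f 0 - f k) * Real.exp (-a)) * (x 0 * y k) := by
            linear_combination -h1
          exact mul_left_cancel₀ (mul_ne_zero hne hE) key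
    have hx0S : x 0 * S = 1 := by
      rw [← hxsum1]
      rw [show (∑' k, x k) = ∑' k, x 0 * y k from tsum_congr hind, tsum_mul_left]
    have hx0v : x 0 = S⁻¹ := by
      field_simp
      linarith [hx0S]
    funext k
    rw [hind k, hx0v]
end

section
/- Let f : ℕ → [0,∞) with f(0) > f(k) for all k ≥ 1 and a > 0. Let (y_k) satisfy y_0 = 1 and y_k = (1/(f(0)−f(k))) ∑_{j=0}^{k−1} y_j f(j) a^{k−j}/(k−j)! for k ≥ 1. If the series ∑_{k≥0} y_k diverges, then no quasispecies associated to f exists. -/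
open Finset

theorem no_quasispecies_of_not_summable
    (f : ℕ → ℝ) (hf0 : ∀ k, 0 ≤ f k) (hf : ∀ k, 1 ≤ k → f k < f 0)
    (a : ℝ) (ha : 0 < a)
    (y : ℕ → ℝ) (hy0 : y 0 = 1)
    (hy : ∀ k, 1 ≤ k →
      y k = (1 / (f 0 - f k)) *
        ∑ j ∈ Finset.range k, y j * f j * a ^ (k - j) / (Nat.factorial (k - j)))
    (hsum : ¬ Summable y) :
    ¬ ∃ x, IsQuasispecies f a x := by
  rintro ⟨x, hxpos, hx0, hx1, hxf, heq⟩
  set L : ℝ := ∑' j, x j * f j with hL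
  have hx0ne : x 0 ≠ 0 := ne_of_gt hx0
  have hexp : Real.exp (-a) ≠ 0 := Real.exp_ne_zero _
  -- λ = f 0 * exp(-a)
  have hLval : L = f 0 * Real.exp (-a) := by
    have h0 := heq 0
    simp [Finset.sum_range_one] at h0
    have : x 0 * (f 0 * Real.exp (-a)) = x 0 * L := by
      rw [← h0]; ring
    exact (mul_left_cancel₀ hx0ne this).symm
  -- recursion for x
  have hxrec : ∀ k, 1 ≤ k →
      x k = (1 / (f 0 - f k)) *
        ∑ j ∈ Finset.range k, x j * f j * a ^ (k - j) / (Nat.factorial (k - j)) := by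
    intro k hk
    have h := heq k
    rw [Finset.sum_range_succ, hLval] at h
    simp only [Nat.sub_self, pow_zero, Nat.factorial_zero, Nat.cast_one, mul_one, div_one] at h
    have hcancel : (∑ j ∈ Finset.range k,
        x j * f j * a ^ (k - j) / (Nat.factorial (k - j))) * Real.exp (-a)
        = (x k * (f 0 - f k)) * Real.exp (-a) := by
      rw [Finset.sum_mul]
      have : ∀ j ∈ Finset.range k,
          x j * f j * a ^ (k - j) / (Nat.factorial (k - j)) * Real.exp (-a)
          = x j * f j * Real.exp (-a) * a ^ (k - j) / (Nat.factorial (k - j)) := by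
        intro j _; ring
      rw [Finset.sum_congr rfl this]
      nlinarith [h]
    have hS := mul_right_cancel₀ hexp hcancel
    have hdf : f 0 - f k ≠ 0 := ne_of_gt (sub_pos.mpr (hf k hk))
    field_simp
    linarith [hS]
  -- x k = x 0 * y k by strong induction
  have hxy : ∀ k, x k = x 0 * y k := by
    intro k
    induction k using Nat.strong_induction_on with
    | _ k ih =>
      rcases Nat.eq_zero_or_pos k with rfl | hk
      · simp [hy0]
      · rw [hxrec k hk, hy k hk, Finset.mul_sum, Finset.mul_sum, Finset.mul_sum]
        refine Finset.sum_congr rfl fun j hj => ?_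
        rw [ih j (Finset.mem_range.mp hj)]
        ring
  -- x is summable
  have hxsum : Summable x := by
    by_contra h
    rw [tsum_eq_zero_of_not_summable h] at hx1
    exact one_ne_zero hx1.symm
  -- hence y is summable
  apply hsum
  have : y = fun k => x k * (x 0)⁻¹ := by
    funext k; rw [hxy k]; field_simp
  rw [this]
  exact hxsum.mul_right _
end

section
/- Let f : ℕ → [0,∞) with f(0) > f(k) for k ≥ 1, a > 0, and let (y_k) solve y_0 = 1, y_k = (1/(f(0)−f(k))) ∑_{j=0}^{k−1} y_j f(j) a^{k−j}/(k−j)!. Then for all k ≥ 1, y_k = (a^k/k!)·(f(0)/(f(0)−f(k)))·(1 + ∑_{1≤h<k} ∑_{1≤i_1<⋯<i_h<k} [k!/(i_1!(i_2−i_1)!⋯(k−i_h)!)] ∏_{t=1}^h f(i_t)/(f(0)−f(i_t))). -/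
open Finset

/-- For a chain `1 ≤ i₁ < ⋯ < i_h < k` encoded as the finset
    `S = {i₁, …, i_h} ⊆ (0, k)`, the product of factorials
    `i₁! (i₂ - i₁)! ⋯ (k - i_h)!` of the successive gaps. -/
def gapFactorials (k : ℕ) (S : Finset ℕ) : ℝ :=
  let L : List ℕ := 0 :: (S.sort (· ≤ ·) ++ [k])
  (List.zipWith (fun p n => ((Nat.factorial (n - p) : ℕ) : ℝ)) L L.tail).prod

/-! Put `g i = f i / (f 0 - f i)` and
`V k = ∑_{S ⊆ (0, k)} ∏_{i ∈ S} g i / gapFactorials k S`.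
Splitting off the largest element `j` of a chain `S` factors its gap product as
`gapFactorials j (S \ {j}) * (k - j)!`, so `V k = 1 / k! + ∑_{0 < j < k} g j / (k - j)! * V j`.
After multiplication by `a ^ k * f 0` this is the recurrence for `y`, whence
`y k = a ^ k * f 0 / (f 0 - f k) * V k` by strong induction; the claimed sum is `k! * V k`. -/

theorem Finset.sort_insert_of_forall_lt {α : Type*} [LinearOrder α] {s : Finset α} {a : α}
    (h : ∀ b ∈ s, b < a) : (insert a s).sort (· ≤ ·) = s.sort (· ≤ ·) ++ [a] := by
  have ha : a ∉ s := fun ha => lt_irrefl a (h a ha)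
  have hl : (s.sort (· ≤ ·) ++ [a]).toFinset = insert a s := by ext; simp
  rw [← hl, List.toFinset_sort]
  · simpa [List.pairwise_append] using fun b hb => (h b hb).le
  · simpa [List.nodup_append] using ha

theorem Finset.sum_powerset_eq_add_sum_max {α β : Type*} [LinearOrder α] [AddCommMonoid β]
    (s : Finset α) (F : Finset α → β) :
    ∑ t ∈ s.powerset, F t =
      F ∅ + ∑ a ∈ s, ∑ t ∈ {b ∈ s | b < a}.powerset, F (insert a t) := by
  induction s using Finset.induction_on_max with
  | empty => simp
  | insert a s hlt ih =>
    have ha : a ∉ s := fun ha => lt_irrefl a (hlt a ha)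
    have below_a : {b ∈ insert a s | b < a} = s := by
      rw [filter_insert, if_neg (lt_irrefl a), filter_true_of_mem hlt]
    have below_b : ∑ b ∈ s, ∑ t ∈ {c ∈ insert a s | c < b}.powerset, F (insert b t) =
        ∑ b ∈ s, ∑ t ∈ {c ∈ s | c < b}.powerset, F (insert b t) :=
      sum_congr rfl fun b hb => by rw [filter_insert, if_neg (hlt b hb).not_gt]
    rw [sum_powerset_insert ha, ih, sum_insert ha, below_a, below_b]
    abel

lemma gapFactorials_empty (k : ℕ) : gapFactorials k ∅ = k.factorial := by
  simp [gapFactorials]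

lemma gapFactorials_insert {S : Finset ℕ} {j k : ℕ} (h : ∀ i ∈ S, i < j) :
    gapFactorials k (insert j S) = gapFactorials j S * (k - j).factorial := by
  simp only [gapFactorials, Finset.sort_insert_of_forall_lt h]
  set l := S.sort (· ≤ ·)
  have hlen : (0 :: l).length = (l ++ [j]).length := by simp
  have hk := List.zipWith_append hlen (l₁' := [j, k]) (l₂' := [k])
    (f := fun p n => ((n - p).factorial : ℝ))
  have hj := List.zipWith_append hlen (l₁' := [j]) (l₂' := [])
    (f := fun p n => ((n - p).factorial : ℝ))
  simp only [List.cons_append, List.append_assoc, List.nil_append, List.zipWith_cons_cons,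
    List.zipWith_nil_right, List.append_nil] at hk hj
  simp [hk, hj]

noncomputable def multinomialChainSum (g : ℕ → ℝ) (k : ℕ) : ℝ :=
  ∑ S ∈ (Ioo 0 k).powerset, (∏ i ∈ S, g i) / gapFactorials k S

lemma multinomialChainSum_eq (g : ℕ → ℝ) (k : ℕ) :
    multinomialChainSum g k =
      1 / k.factorial + ∑ j ∈ Ioo 0 k, g j / (k - j).factorial * multinomialChainSum g j := by
  rw [multinomialChainSum, sum_powerset_eq_add_sum_max, gapFactorials_empty, prod_empty]
  congr 1
  refine sum_congr rfl fun j hj => ?_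
  have hjk : j < k := (mem_Ioo.mp hj).2
  rw [Ioo_filter_lt, min_eq_right hjk.le, multinomialChainSum, mul_sum]
  refine sum_congr rfl fun S hS => ?_
  have hSj : ∀ i ∈ S, i < j := fun i hi => (mem_Ioo.mp (mem_powerset.mp hS hi)).2
  rw [gapFactorials_insert hSj, prod_insert fun hjS => lt_irrefl j (hSj j hjS)]
  ring

theorem eq_pow_mul_multinomialChainSum_of_recurrence (f : ℕ → ℝ)
    (hf : ∀ k, 1 ≤ k → f k ≠ f 0) (a : ℝ) (y : ℕ → ℝ) (hy0 : y 0 = 1)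
    (hy : ∀ k, 1 ≤ k →
      y k = (1 / (f 0 - f k)) *
        ∑ j ∈ range k, y j * f j * a ^ (k - j) / (k - j).factorial) (k : ℕ) (hk : 1 ≤ k) :
    y k = a ^ k * (f 0 / (f 0 - f k)) * multinomialChainSum (fun i => f i / (f 0 - f i)) k := by
  induction k using Nat.strong_induction_on with
  | _ k ih =>
  have hterm : ∀ j ∈ Ioo 0 k, y j * f j * a ^ (k - j) / (k - j).factorial =
      a ^ k * f 0 * (f j / (f 0 - f j) / (k - j).factorial *
        multinomialChainSum (fun i => f i / (f 0 - f i)) j) := by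
    intro j hj
    obtain ⟨hj0, hjk⟩ := mem_Ioo.mp hj
    rw [ih j hjk hj0, ← pow_mul_pow_sub a hjk.le]
    ring
  have hIco : Ico 1 k = Ioo 0 k := Ico_succ_left_eq_Ioo 0 k
  rw [hy k hk, sum_range_eq_add_Ico _ hk, hIco, sum_congr rfl hterm,
    ← mul_sum, multinomialChainSum_eq, hy0, Nat.sub_zero]
  have hk0 : f 0 - f k ≠ 0 := sub_ne_zero.mpr (hf k hk).symm
  field_simp

theorem multinomial_formula_general
    (f : ℕ → ℝ) (hf : ∀ k, 1 ≤ k → f k < f 0)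
    (a : ℝ)
    (y : ℕ → ℝ) (hy0 : y 0 = 1)
    (hy : ∀ k, 1 ≤ k →
      y k = (1 / (f 0 - f k)) *
        ∑ j ∈ Finset.range k, y j * f j * a ^ (k - j) / (Nat.factorial (k - j))) :
    ∀ k, 1 ≤ k →
      y k = a ^ k / (Nat.factorial k) * (f 0 / (f 0 - f k)) *
        ∑ S ∈ (Finset.Ioo 0 k).powerset,
          ((Nat.factorial k : ℝ) / gapFactorials k S) *
            ∏ i ∈ S, f i / (f 0 - f i) := by
  intro k hk
  have hsum : ∑ S ∈ (Ioo 0 k).powerset,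
      ((k.factorial : ℝ) / gapFactorials k S) * ∏ i ∈ S, f i / (f 0 - f i) =
        k.factorial * multinomialChainSum (fun i => f i / (f 0 - f i)) k := by
    rw [multinomialChainSum, mul_sum]
    exact sum_congr rfl fun S _ => by ring
  rw [hsum, eq_pow_mul_multinomialChainSum_of_recurrence f (fun k hk => (hf k hk).ne) a y hy0 hy
    k hk]
  field_simp

theorem multinomial_formula
    (f : ℕ → ℝ) (hf0 : ∀ k, 0 ≤ f k) (hf : ∀ k, 1 ≤ k → f k < f 0)
    (a : ℝ) (ha : 0 < a)
    (y : ℕ → ℝ) (hy0 : y 0 = 1)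
    (hy : ∀ k, 1 ≤ k →
      y k = (1 / (f 0 - f k)) *
        ∑ j ∈ Finset.range k, y j * f j * a ^ (k - j) / (Nat.factorial (k - j))) :
    ∀ k, 1 ≤ k →
      y k = a ^ k / (Nat.factorial k) * (f 0 / (f 0 - f k)) *
        ∑ S ∈ (Finset.Ioo 0 k).powerset,
          ((Nat.factorial k : ℝ) / gapFactorials k S) *
            ∏ i ∈ S, f i / (f 0 - f i) :=
  multinomial_formula_general f hf a y hy0 hy
end

section
/- Let f : ℕ → [0,∞) with f(0) > f(k) for k ≥ 1, a > 0, and let (y_k(f)) be the solution to the recurrence y_0 = 1, y_k = (1/(f(0)−f(k))) ∑_{j=0}^{k−1} y_j f(j) a^{k−j}/(k−j)!. For j ≥ 0 define the shifted fitness f^{(j)}(0) = f(0), f^{(j)}(i) = f(i+j) for i ≥ 1. Then for all k ≥ 2: y_k(f) = (a^k/k!)·f(0)/(f(0)−f(k)) + ∑_{j=1}^{k−1} (a^j/j!)·(f(j)/(f(0)−f(j)))·y_{k−j}(f^{(j)}). -/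
open Finset

/-- The fitness landscape obtained from `f` by keeping the class-0 fitness
    and shifting all other fitnesses `j` places to the left. -/
def shift (f : ℕ → ℝ) (j : ℕ) : ℕ → ℝ :=
  fun i => if i = 0 then f 0 else f (i + j)

/-!
Multiply the recurrence for `y_k(f)` by `f 0 - f k`, split off the `j = 0` term of its sum and
expand every other `y_m(f)` by the decomposition at `m < k` (strong induction). The recurrence
for `y_{k-j}(f^{(j)})` has the same factor `f^{(j)} 0 - f^{(j)} (k - j) = f 0 - f k`; after
splitting off its `i = 0` term, the remaining double sum matches the expanded one under
`m = i + j`.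
-/

lemma shift_zero (f : ℕ → ℝ) (j : ℕ) : shift f j 0 = f 0 := if_pos rfl

lemma shift_of_ne_zero (f : ℕ → ℝ) (j : ℕ) {i : ℕ} (hi : i ≠ 0) :
    shift f j i = f (i + j) :=
  if_neg hi

lemma shift_lt_shift_zero {f : ℕ → ℝ} (hf : ∀ k, 1 ≤ k → f k < f 0) (j : ℕ) :
    ∀ k, 1 ≤ k → shift f j k < shift f j 0 := fun k hk => by
  rw [shift_zero, shift_of_ne_zero f j (by omega)]
  exact hf _ (by omega)

lemma sum_range_eq_add_sum_Ioo {M : Type*} [AddCommMonoid M] (F : ℕ → M) {n : ℕ}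
    (hn : 0 < n) : ∑ i ∈ range n, F i = F 0 + ∑ i ∈ Ioo 0 n, F i := by
  rw [sum_range_eq_add_Ico F hn, ← Ico_add_one_left_eq_Ioo, zero_add]

lemma sum_Ioo_sum_Ioo_sub {M : Type*} [AddCommMonoid M] (k : ℕ) (F : ℕ → ℕ → M) :
    ∑ j ∈ Ioo 0 k, ∑ i ∈ Ioo 0 (k - j), F j (i + j) =
      ∑ m ∈ Ioo 0 k, ∑ j ∈ Ioo 0 m, F j m := by
  have reindex (j : ℕ) (hj : j ∈ Ioo 0 k) :
      ∑ i ∈ Ioo 0 (k - j), F j (i + j) = ∑ m ∈ Ioo j k, F j m := by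
    have : Ioo j k = (Ioo 0 (k - j)).map (addRightEmbedding j) := by
      rw [map_add_right_Ioo, zero_add, Nat.sub_add_cancel (mem_Ioo.1 hj).2.le]
    rw [this, sum_map]
    rfl
  rw [sum_congr rfl reindex]
  exact sum_comm' fun j m => by simp only [mem_Ioo]; omega

noncomputable def recurrenceSum (a : ℝ) (Y : (ℕ → ℝ) → ℕ → ℝ) (φ : ℕ → ℝ) (k : ℕ) : ℝ :=
  ∑ j ∈ range k, Y φ j * φ j * a ^ (k - j) / (k - j).factorial

lemma recurrenceSum_eq_add {a : ℝ} {Y : (ℕ → ℝ) → ℕ → ℝ}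
    (hY0 : ∀ φ : ℕ → ℝ, (∀ k, 1 ≤ k → φ k < φ 0) → Y φ 0 = 1)
    {φ : ℕ → ℝ} (hφ : ∀ k, 1 ≤ k → φ k < φ 0) {k : ℕ} (hk : 0 < k) :
    recurrenceSum a Y φ k = a ^ k / k.factorial * φ 0 +
      ∑ i ∈ Ioo 0 k, Y φ i * φ i * a ^ (k - i) / (k - i).factorial := by
  rw [recurrenceSum, sum_range_eq_add_sum_Ioo _ hk, hY0 φ hφ, Nat.sub_zero]
  ring

lemma recurrenceSum_shift_eq_add {a : ℝ} {Y : (ℕ → ℝ) → ℕ → ℝ}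
    (hY0 : ∀ φ : ℕ → ℝ, (∀ k, 1 ≤ k → φ k < φ 0) → Y φ 0 = 1)
    {f : ℕ → ℝ} (hf : ∀ k, 1 ≤ k → f k < f 0) {j k : ℕ} (hjk : j < k) :
    recurrenceSum a Y (shift f j) (k - j) = a ^ (k - j) / (k - j).factorial * f 0 +
      ∑ i ∈ Ioo 0 (k - j),
        Y (shift f j) i * f (i + j) * a ^ (k - (i + j)) / (k - (i + j)).factorial := by
  rw [recurrenceSum_eq_add hY0 (shift_lt_shift_zero hf j) (by omega), shift_zero]
  refine congrArg _ (sum_congr rfl fun i hi => ?_)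
  rw [shift_of_ne_zero f j (mem_Ioo.1 hi).1.ne', Nat.sub_sub, add_comm j i]

lemma recurrenceSum_eq_of_decomposition {a : ℝ} {Y : (ℕ → ℝ) → ℕ → ℝ}
    (hY0 : ∀ φ : ℕ → ℝ, (∀ k, 1 ≤ k → φ k < φ 0) → Y φ 0 = 1)
    {f : ℕ → ℝ} (hf : ∀ k, 1 ≤ k → f k < f 0) {k : ℕ} (hk : 0 < k)
    (hdecomp : ∀ m ∈ Ioo 0 k, Y f m = a ^ m / m.factorial * (f 0 / (f 0 - f m)) +
      ∑ j ∈ Ioo 0 m, a ^ j / j.factorial * (f j / (f 0 - f j)) * Y (shift f j) (m - j)) :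
    recurrenceSum a Y f k = a ^ k / k.factorial * f 0 +
      ∑ j ∈ Ioo 0 k,
        a ^ j / j.factorial * (f j / (f 0 - f j)) * recurrenceSum a Y (shift f j) (k - j) := by
  set g : ℕ → ℝ := fun j => a ^ j / j.factorial * (f j / (f 0 - f j))
  set c : ℕ → ℝ := fun n => a ^ n / n.factorial
  have expand_Y (m : ℕ) (hm : m ∈ Ioo 0 k) :
      Y f m * f m * a ^ (k - m) / (k - m).factorial = g m * (c (k - m) * f 0) +
        ∑ j ∈ Ioo 0 m,
          g j * (Y (shift f j) (m - j) * f m * a ^ (k - m) / (k - m).factorial) := by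
    rw [hdecomp m hm, add_mul, add_mul, add_div, sum_mul, sum_mul, sum_div]
    congr 1
    · ring
    · exact sum_congr rfl fun j _ => by ring
  have expand_shift (j : ℕ) (hj : j ∈ Ioo 0 k) :
      g j * recurrenceSum a Y (shift f j) (k - j) = g j * (c (k - j) * f 0) +
        ∑ i ∈ Ioo 0 (k - j), g j * (Y (shift f j) (i + j - j) * f (i + j) *
          a ^ (k - (i + j)) / (k - (i + j)).factorial) := by
    simp only [recurrenceSum_shift_eq_add hY0 hf (mem_Ioo.1 hj).2, mul_add, mul_sum,
      Nat.add_sub_cancel, c]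
  rw [recurrenceSum_eq_add hY0 hf hk, sum_congr rfl expand_Y, sum_congr rfl expand_shift,
    sum_add_distrib, sum_add_distrib, sum_Ioo_sum_Ioo_sub k fun j m =>
      g j * (Y (shift f j) (m - j) * f m * a ^ (k - m) / (k - m).factorial)]

lemma Y_eq_decomposition {a : ℝ} {Y : (ℕ → ℝ) → ℕ → ℝ}
    (hY0 : ∀ φ : ℕ → ℝ, (∀ k, 1 ≤ k → φ k < φ 0) → Y φ 0 = 1)
    (hY : ∀ φ : ℕ → ℝ, (∀ k, 1 ≤ k → φ k < φ 0) → ∀ k, 1 ≤ k →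
      Y φ k = 1 / (φ 0 - φ k) * recurrenceSum a Y φ k)
    {k : ℕ} (hk : 0 < k) :
    ∀ f : ℕ → ℝ, (∀ k, 1 ≤ k → f k < f 0) →
      Y f k = a ^ k / k.factorial * (f 0 / (f 0 - f k)) +
        ∑ j ∈ Ioo 0 k, a ^ j / j.factorial * (f j / (f 0 - f j)) * Y (shift f j) (k - j) := by
  induction k using Nat.strong_induction_on with
  | _ k ih =>
  intro f hf
  have shift_eq (j : ℕ) (hj : j ∈ Ioo 0 k) :
      Y (shift f j) (k - j) = 1 / (f 0 - f k) * recurrenceSum a Y (shift f j) (k - j) := by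
    obtain ⟨hj0, hjk⟩ := mem_Ioo.1 hj
    rw [hY _ (shift_lt_shift_zero hf j) _ (by omega), shift_zero,
      shift_of_ne_zero f j (by omega), Nat.sub_add_cancel hjk.le]
  rw [hY f hf k hk, recurrenceSum_eq_of_decomposition hY0 hf hk
    fun m hm => ih m (mem_Ioo.1 hm).2 (mem_Ioo.1 hm).1 f hf, mul_add, mul_sum]
  congr 1
  · ring
  · exact sum_congr rfl fun j hj => by rw [shift_eq j hj]; ring

theorem shift_decomposition_general
    (f : ℕ → ℝ) (hf : ∀ k, 1 ≤ k → f k < f 0)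
    (a : ℝ)
    (Y : (ℕ → ℝ) → ℕ → ℝ)
    (hY0 : ∀ φ : ℕ → ℝ, (∀ k, 1 ≤ k → φ k < φ 0) → Y φ 0 = 1)
    (hY : ∀ φ : ℕ → ℝ, (∀ k, 1 ≤ k → φ k < φ 0) → ∀ k, 1 ≤ k →
      Y φ k = (1 / (φ 0 - φ k)) *
        ∑ j ∈ Finset.range k, Y φ j * φ j * a ^ (k - j) / (Nat.factorial (k - j))) :
    ∀ k, 2 ≤ k →
      Y f k = a ^ k / (Nat.factorial k) * (f 0 / (f 0 - f k)) +
        ∑ j ∈ Finset.Ioo 0 k,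
          a ^ j / (Nat.factorial j) * (f j / (f 0 - f j)) * Y (shift f j) (k - j) :=
  fun _ hk => Y_eq_decomposition hY0 hY (by omega) f hf

theorem shift_decomposition
    (f : ℕ → ℝ) (hf0 : ∀ k, 0 ≤ f k) (hf : ∀ k, 1 ≤ k → f k < f 0)
    (a : ℝ) (ha : 0 < a)
    (Y : (ℕ → ℝ) → ℕ → ℝ)
    (hY0 : ∀ φ : ℕ → ℝ, (∀ k, 1 ≤ k → φ k < φ 0) → Y φ 0 = 1)
    (hY : ∀ φ : ℕ → ℝ, (∀ k, 1 ≤ k → φ k < φ 0) → ∀ k, 1 ≤ k →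
      Y φ k = (1 / (φ 0 - φ k)) *
        ∑ j ∈ Finset.range k, Y φ j * φ j * a ^ (k - j) / (Nat.factorial (k - j))) :
    ∀ k, 2 ≤ k →
      Y f k = a ^ k / (Nat.factorial k) * (f 0 / (f 0 - f k)) +
        ∑ j ∈ Finset.Ioo 0 k,
          a ^ j / (Nat.factorial j) * (f j / (f 0 - f j)) * Y (shift f j) (k - j) :=
  shift_decomposition_general f hf a Y hY0 hY
end

section
/- Let f, g : ℕ → [0,∞) with f(0) = g(0), f(0) > f(k) and g(0) > g(k) for all k ≥ 1, and f(k) ≥ g(k) for all k ≥ 1. Let (y_k(f)) and (y_k(g)) be the respective solutions of the recurrence y_0 = 1, y_k = (1/(y-landscape(0)−landscape(k))) ∑_{j=0}^{k−1} y_j·landscape(j)·a^{k−j}/(k−j)!. Then y_k(f) ≥ y_k(g) for all k ≥ 0. -/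
open Finset

theorem comparison_lemma
    (a : ℝ) (ha : 0 < a)
    (f g : ℕ → ℝ) (hf0 : ∀ k, 0 ≤ f k) (hg0 : ∀ k, 0 ≤ g k)
    (hf : ∀ k, 1 ≤ k → f k < f 0) (hg : ∀ k, 1 ≤ k → g k < g 0)
    (hfg0 : f 0 = g 0) (hfg : ∀ k, 1 ≤ k → g k ≤ f k)
    (yf : ℕ → ℝ) (hyf0 : yf 0 = 1)
    (hyf : ∀ k, 1 ≤ k →
      yf k = (1 / (f 0 - f k)) *
        ∑ j ∈ Finset.range k, yf j * f j * a ^ (k - j) / (Nat.factorial (k - j)))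
    (yg : ℕ → ℝ) (hyg0 : yg 0 = 1)
    (hyg : ∀ k, 1 ≤ k →
      yg k = (1 / (g 0 - g k)) *
        ∑ j ∈ Finset.range k, yg j * g j * a ^ (k - j) / (Nat.factorial (k - j))) :
    ∀ k, yg k ≤ yf k := by
  have key : ∀ k, 0 ≤ yg k ∧ yg k ≤ yf k := by
    intro k
    induction k using Nat.strong_induction_on with
    | _ k ih =>
      rcases Nat.eq_zero_or_pos k with hk | hk
      · subst hk; simp [hyg0, hyf0]
      · have hk1 : 1 ≤ k := hk
        have hgpos : 0 < g 0 - g k := sub_pos.mpr (hg k hk1)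
        have hfpos : 0 < f 0 - f k := sub_pos.mpr (hf k hk1)
        have hle : f 0 - f k ≤ g 0 - g k := by
          rw [← hfg0]; exact sub_le_sub_left (hfg k hk1) _
        have hSg0 : 0 ≤ ∑ j ∈ Finset.range k,
            yg j * g j * a ^ (k - j) / (Nat.factorial (k - j)) := by
          apply Finset.sum_nonneg
          intro j hj
          have h1 := (ih j (Finset.mem_range.mp hj)).1
          apply div_nonneg _ (by positivity)
          exact mul_nonneg (mul_nonneg h1 (hg0 j)) (by positivity)
        have hSle : (∑ j ∈ Finset.range k, yg j * g j * a ^ (k - j) / (Nat.factorial (k - j)))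
            ≤ ∑ j ∈ Finset.range k, yf j * f j * a ^ (k - j) / (Nat.factorial (k - j)) := by
          apply Finset.sum_le_sum
          intro j hj
          have hj' := Finset.mem_range.mp hj
          have hterm : yg j * g j ≤ yf j * f j := by
            rcases Nat.eq_zero_or_pos j with hj0 | hj0
            · subst hj0; rw [hyg0, hyf0, hfg0]
            · exact mul_le_mul (ih j hj').2 (hfg j hj0) (hg0 j)
                (le_trans (ih j hj').1 (ih j hj').2)
          apply div_le_div_of_nonneg_right _ (by positivity)
          exact mul_le_mul_of_nonneg_right hterm (by positivity)
        constructor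
        · rw [hyg k hk1]
          exact mul_nonneg (by positivity) hSg0
        · rw [hyg k hk1, hyf k hk1]
          exact mul_le_mul (one_div_le_one_div_of_le hfpos hle) hSle hSg0
            (by positivity)
  exact fun k => (key k).2
end

section
/- Let σ > c ≥ 0, a > 0, N ≥ 1, and let g_N(0) = σ, g_N(k) = 0 for 1 ≤ k ≤ N, g_N(k) = c for k > N. Let (y_k(g_N)) solve the recurrence (R) for g_N. Then the series ∑_{k≥0} y_k(g_N) converges if and only if σ e^{−a} > c. -/
/-!
Clearing denominators, (R) says that `σ y` is the Cauchy product of `y g` with `(aᵏ / k!)`, i.e.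
`σ Y(x) = U(x) e^{ax}` for `Y = ∑ yₖ xᵏ` and `U = ∑ yₖ gₖ xᵏ`; replacing `yₖ` by `yₖ xᵏ` turns `a`
into `a x`. For `g = g_N` one has `U = σ + c (Y - P)` with `P(x) = ∑_{k ≤ N} (a x)ᵏ / k! < e^{ax}`.
If `c e^a < σ`, the truncated identity `σ Yₙ(1) ≤ e^a (σ + c Yₙ(1))` bounds the partial sums.
If `c e^a ≥ σ`, take `x ∈ (0, 1]` with `c e^{ax} = σ`: convergence of `∑ yₖ` would make `Y(x)`
finite, and the identity would give `(σ - c P(x)) e^{ax} = 0`, although `c P(x) < c e^{ax} = σ`.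
-/

open Finset Nat Real

/-- (R) for a `g` with `g 0 = σ`, cleared of denominators; its `k = 0` instance `σ y₀ = y₀ g₀` is
void, so `y₀` is free. -/
def IsConvSolution (σ a : ℝ) (g y : ℕ → ℝ) : Prop :=
  ∀ k, σ * y k = ∑ j ∈ range (k + 1), y j * g j * (a ^ (k - j) / (k - j)!)

namespace IsConvSolution

variable {σ a : ℝ} {g y : ℕ → ℝ}

theorem sub_mul_eq (h : IsConvSolution σ a g y) (k : ℕ) :
    (σ - g k) * y k = ∑ j ∈ range k, y j * g j * (a ^ (k - j) / (k - j)!) := by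
  rw [sub_mul, h k, sum_range_succ]
  simp [mul_comm]

theorem of_recurrence (hg0 : g 0 = σ) (hgσ : ∀ k, 1 ≤ k → g k ≠ σ)
    (hy : ∀ k, 1 ≤ k →
      y k = (1 / (g 0 - g k)) * ∑ j ∈ range k, y j * g j * a ^ (k - j) / (k - j)!) :
    IsConvSolution σ a g y := by
  intro k
  rw [sum_range_succ, Nat.sub_self]
  rcases Nat.eq_zero_or_pos k with rfl | hk
  · simp [hg0, mul_comm]
  · have hne : σ - g k ≠ 0 := sub_ne_zero.mpr (hgσ k hk).symm
    rw [hy k hk, hg0]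
    field_simp
    simp only [mul_div_assoc]
    ring

theorem nonneg (h : IsConvSolution σ a g y) (ha : 0 ≤ a) (hg : ∀ k, 0 ≤ g k)
    (hgσ : ∀ k, 1 ≤ k → g k < σ) (hy0 : 0 ≤ y 0) (k : ℕ) : 0 ≤ y k := by
  induction k using Nat.strong_induction_on with
  | _ k ih =>
    rcases Nat.eq_zero_or_pos k with rfl | hk
    · exact hy0
    have hsum : 0 ≤ (σ - g k) * y k := by
      rw [h.sub_mul_eq k]
      exact sum_nonneg fun j hj => by have := ih j (mem_range.mp hj); have := hg j; positivity
    exact nonneg_of_mul_nonneg_right hsum (sub_pos.mpr (hgσ k hk))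

theorem mul_pow (h : IsConvSolution σ a g y) (x : ℝ) :
    IsConvSolution σ (a * x) g (fun k => y k * x ^ k) := by
  intro k
  have hterm : ∀ j ∈ range (k + 1), y j * x ^ j * g j * ((a * x) ^ (k - j) / (k - j)!) =
      x ^ k * (y j * g j * (a ^ (k - j) / (k - j)!)) := by
    intro j hj
    rw [← pow_mul_pow_sub x (Nat.lt_succ_iff.mp (mem_range.mp hj)), _root_.mul_pow]
    ring
  rw [sum_congr rfl hterm, ← mul_sum, ← h k]
  ring

theorem eq_pow_div_factorial (h : IsConvSolution σ a g y) (hσ : σ ≠ 0) (hg0 : g 0 = σ)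
    (hy0 : y 0 = 1) {N : ℕ} (hgN : ∀ k, 1 ≤ k → k ≤ N → g k = 0) {k : ℕ} (hk : k ≤ N) :
    y k = a ^ k / k ! := by
  rcases Nat.eq_zero_or_pos k with rfl | hk0
  · simp [hy0]
  have hrec := h.sub_mul_eq k
  rw [hgN k hk0 hk, sub_zero, sum_eq_single 0, hy0, hg0, Nat.sub_zero] at hrec
  · exact mul_left_cancel₀ hσ (by rw [hrec]; ring)
  · intro j hj hj0
    rw [hgN j (Nat.one_le_iff_ne_zero.mpr hj0) (by have := mem_range.mp hj; omega)]
    ring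
  · simp [hk0]

theorem mul_tsum_eq (h : IsConvSolution σ a g y) (hyg : Summable fun j => ‖y j * g j‖) :
    σ * ∑' k, y k = (∑' j, y j * g j) * exp a := by
  have hexp : Summable fun i : ℕ => ‖a ^ i / (i ! : ℝ)‖ := by
    simpa [norm_div, norm_pow] using Real.summable_pow_div_factorial ‖a‖
  rw [exp_eq_exp_ℝ, ← (NormedSpace.expSeries_div_hasSum_exp a).tsum_eq,
    tsum_mul_tsum_eq_tsum_sum_range_of_summable_norm hyg hexp, ← tsum_mul_left]
  exact tsum_congr h

theorem mul_sum_range_le (h : IsConvSolution σ a g y) (ha : 0 ≤ a)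
    (hyg : ∀ j, 0 ≤ y j * g j) (n : ℕ) :
    σ * ∑ k ∈ range n, y k ≤ exp a * ∑ j ∈ range n, y j * g j := by
  rw [mul_sum, sum_congr rfl fun k _ => h k,
    sum_range_diag_flip n fun j i => y j * g j * (a ^ i / i !), mul_sum]
  refine sum_le_sum fun j _ => ?_
  rw [← mul_sum, mul_comm (exp a)]
  exact mul_le_mul_of_nonneg_left (sum_le_exp_of_nonneg ha _) (hyg j)

end IsConvSolution

theorem Real.sum_range_pow_div_factorial_lt_exp {x : ℝ} (hx : 0 < x) (n : ℕ) :
    ∑ i ∈ range n, x ^ i / i ! < exp x := by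
  have h := sum_le_exp_of_nonneg hx.le (n + 1)
  rw [sum_range_succ] at h
  have : 0 < x ^ n / n ! := by positivity
  linarith

section

variable {σ c a : ℝ} {N : ℕ} {g y : ℕ → ℝ}

theorem sum_range_mul_le_add_mul_sum (hσ : 0 ≤ σ) (hc : 0 ≤ c) (hy : ∀ k, 0 ≤ y k)
    (hy0 : y 0 = 1) (hg0 : g 0 = σ) (hgc : ∀ k, 1 ≤ k → g k ≤ c) (n : ℕ) :
    ∑ j ∈ range n, y j * g j ≤ σ + c * ∑ j ∈ range n, y j := by
  induction n with
  | zero => simpa using hσ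
  | succ n ih =>
    rw [sum_range_succ, sum_range_succ, mul_add]
    rcases Nat.eq_zero_or_pos n with rfl | hn
    · simpa [hy0, hg0] using hc
    · nlinarith [mul_le_mul_of_nonneg_left (hgc n hn) (hy n)]

theorem IsConvSolution.summable (h : IsConvSolution σ a g y) (ha : 0 ≤ a) (hc : 0 ≤ c)
    (hy : ∀ k, 0 ≤ y k) (hy0 : y 0 = 1) (hg : ∀ k, 0 ≤ g k) (hg0 : g 0 = σ)
    (hgc : ∀ k, 1 ≤ k → g k ≤ c) (hlt : c * exp a < σ) : Summable y := by
  have hσ : 0 ≤ σ := (by positivity : 0 ≤ c * exp a).trans hlt.le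
  refine summable_of_sum_range_le (c := σ * exp a / (σ - c * exp a)) hy fun n => ?_
  rw [le_div_iff₀ (sub_pos.mpr hlt)]
  have hconv := h.mul_sum_range_le ha (fun j => mul_nonneg (hy j) (hg j)) n
  have hU := sum_range_mul_le_add_mul_sum hσ hc hy hy0 hg0 hgc n
  nlinarith [mul_le_mul_of_nonneg_left hU (exp_pos a).le]

theorem IsConvSolution.mul_exp_ne (h : IsConvSolution σ a g y) (ha : 0 < a) (hc : 0 < c)
    (hy0 : y 0 = 1) (hg0 : g 0 = σ) (hg1 : ∀ k, 1 ≤ k → k ≤ N → g k = 0)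
    (hg2 : ∀ k, N < k → g k = c) (hs : Summable y) : c * exp a ≠ σ := by
  intro heq
  have hσ : σ ≠ 0 := heq ▸ (by positivity : 0 < c * exp a).ne'
  have htail : ∀ k ∉ range (N + 1), y k * g k - c * y k = 0 := fun k hk => by
    rw [hg2 k (by simpa using hk)]
    ring
  have hhead : ∑ k ∈ range (N + 1), y k * g k = σ := by
    rw [sum_eq_single 0 (fun k hk hk0 => ?_) (by simp), hy0, hg0, one_mul]
    rw [hg1 k (Nat.one_le_iff_ne_zero.mpr hk0) (Nat.lt_succ_iff.mp (mem_range.mp hk)), mul_zero]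
  have hyg : HasSum (fun k => y k * g k) (σ - c * ∑ k ∈ range (N + 1), y k + c * ∑' k, y k) := by
    have := (hasSum_sum_of_ne_finset_zero htail).add (hs.hasSum.mul_left c)
    simpa only [sub_add_cancel, sum_sub_distrib, hhead, ← mul_sum] using this
  have hP : ∑ k ∈ range (N + 1), y k < exp a := by
    rw [sum_congr rfl fun k hk => h.eq_pow_div_factorial hσ hg0 hy0 hg1
      (Nat.lt_succ_iff.mp (mem_range.mp hk))]
    exact sum_range_pow_div_factorial_lt_exp ha _
  have key := h.mul_tsum_eq (by simpa only [Real.norm_eq_abs] using hyg.summable.abs)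
  rw [hyg.tsum_eq, add_mul, mul_right_comm c, heq] at key
  have hzero : (σ - c * ∑ k ∈ range (N + 1), y k) * exp a = 0 := by linarith
  have := (mul_eq_zero.mp hzero).resolve_right (exp_pos a).ne'
  linarith [mul_lt_mul_of_pos_left hP hc]

theorem IsConvSolution.mul_exp_lt (h : IsConvSolution σ a g y) (ha : 0 < a) (hσ : 0 < σ)
    (hσc : c < σ) (hy : ∀ k, 0 ≤ y k) (hy0 : y 0 = 1) (hg0 : g 0 = σ)
    (hg1 : ∀ k, 1 ≤ k → k ≤ N → g k = 0) (hg2 : ∀ k, N < k → g k = c) (hs : Summable y) :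
    c * exp a < σ := by
  by_contra! hle
  have hc : 0 < c := pos_of_mul_pos_left (hσ.trans_le hle) (exp_pos a).le
  have hσc' : 0 < σ / c := div_pos hσ hc
  have hb : 0 < log (σ / c) := log_pos ((one_lt_div hc).mpr hσc)
  have hba : log (σ / c) ≤ a := by
    rw [log_le_iff_le_exp hσc', div_le_iff₀ hc, mul_comm]
    exact hle
  have hx : log (σ / c) / a ≤ 1 := div_le_one_of_le₀ hba ha.le
  have hz := h.mul_pow (log (σ / c) / a)
  rw [mul_div_cancel₀ _ ha.ne'] at hz
  refine hz.mul_exp_ne hb hc (by simp [hy0]) hg0 hg1 hg2 ?_ ?_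
  · exact hs.of_nonneg_of_le (fun k => mul_nonneg (hy k) (by positivity))
      fun k => mul_le_of_le_one_right (hy k) (pow_le_one₀ (by positivity) hx)
  · rw [exp_log hσc']
    field_simp

end

theorem gN_series_convergence_iff_general
    (σ c a : ℝ) (hσc : c < σ) (hc : 0 ≤ c) (ha : 0 < a)
    (N : ℕ)
    (g : ℕ → ℝ) (hg0 : g 0 = σ)
    (hg1 : ∀ k, 1 ≤ k → k ≤ N → g k = 0)
    (hg2 : ∀ k, N < k → g k = c)
    (y : ℕ → ℝ) (hy0 : y 0 = 1)
    (hy : ∀ k, 1 ≤ k →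
      y k = (1 / (g 0 - g k)) *
        ∑ j ∈ Finset.range k, y j * g j * a ^ (k - j) / (Nat.factorial (k - j))) :
    Summable y ↔ c < σ * Real.exp (-a) := by
  have hσ : 0 < σ := hc.trans_lt hσc
  have hgc : ∀ k, 1 ≤ k → g k ≤ c := fun k hk => by
    rcases le_or_gt k N with hkN | hkN
    · rw [hg1 k hk hkN]; exact hc
    · rw [hg2 k hkN]
  have hg : ∀ k, 0 ≤ g k := fun k => by
    rcases Nat.eq_zero_or_pos k with rfl | hk
    · rw [hg0]; exact hσ.le
    rcases le_or_gt k N with hkN | hkN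
    · rw [hg1 k hk hkN]
    · rw [hg2 k hkN]; exact hc
  have hgσ : ∀ k, 1 ≤ k → g k < σ := fun k hk => (hgc k hk).trans_lt hσc
  have hconv := IsConvSolution.of_recurrence hg0 (fun k hk => (hgσ k hk).ne) hy
  have hy_nonneg := hconv.nonneg ha.le hg hgσ (hy0 ▸ zero_le_one)
  rw [exp_neg, lt_mul_inv_iff₀ (exp_pos a)]
  exact ⟨hconv.mul_exp_lt ha hσ hσc hy_nonneg hy0 hg0 hg1 hg2,
    hconv.summable ha.le hc hy_nonneg hy0 hg hg0 hgc⟩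

theorem gN_series_convergence_iff
    (σ c a : ℝ) (hσc : c < σ) (hc : 0 ≤ c) (ha : 0 < a)
    (N : ℕ) (hN : 1 ≤ N)
    (g : ℕ → ℝ) (hg0 : g 0 = σ)
    (hg1 : ∀ k, 1 ≤ k → k ≤ N → g k = 0)
    (hg2 : ∀ k, N < k → g k = c)
    (y : ℕ → ℝ) (hy0 : y 0 = 1)
    (hy : ∀ k, 1 ≤ k →
      y k = (1 / (g 0 - g k)) *
        ∑ j ∈ Finset.range k, y j * g j * a ^ (k - j) / (Nat.factorial (k - j))) :
    Summable y ↔ c < σ * Real.exp (-a) :=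
  gN_series_convergence_iff_general σ c a hσc hc ha N g hg0 hg1 hg2 y hy0 hy
end

section
/- Let f : ℕ → [0,∞) with f(0) > f(k) for all k ≥ 1 and a > 0, and let (y_k) solve the recurrence (R). If f(0)e^{−a} > limsup_{n→∞} f(n), then ∑_{k≥0} y_k converges (hence a unique quasispecies associated to f exists). -/
set_option maxHeartbeats 1000000

open Finset Filter

theorem error_threshold_subcritical
    (f : ℕ → ℝ) (hf0 : ∀ k, 0 ≤ f k) (hf : ∀ k, 1 ≤ k → f k < f 0)
    (a : ℝ) (ha : 0 < a)
    (y : ℕ → ℝ) (hy0 : y 0 = 1)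
    (hy : ∀ k, 1 ≤ k →
      y k = (1 / (f 0 - f k)) *
        ∑ j ∈ Finset.range k, y j * f j * a ^ (k - j) / (Nat.factorial (k - j)))
    (hth : limsup f atTop < f 0 * Real.exp (-a)) :
    Summable y ∧ ∃! x, IsQuasispecies f a x := by
  classical
  have hfle : ∀ k, f k ≤ f 0 := by
    intro k
    rcases Nat.eq_zero_or_pos k with h | h
    · simp [h]
    · exact (hf k h).le
  have hypos : ∀ k, 0 ≤ y k := by
    intro k
    induction k using Nat.strong_induction_on with
    | _ k ih =>
      rcases Nat.eq_zero_or_pos k with h | h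
      · simp [h, hy0]
      · rw [hy k h]
        apply mul_nonneg
        · exact one_div_nonneg.2 (sub_nonneg.2 (hf k h).le)
        · apply Finset.sum_nonneg
          intro j hj
          have h1 := ih j (Finset.mem_range.1 hj)
          have h2 := hf0 j
          positivity
  have hGe : ∀ k, ∑ j ∈ Finset.range k, y j * f j * a ^ (k - j) / (Nat.factorial (k - j))
      = (f 0 - f k) * y k := by
    intro k
    rcases Nat.eq_zero_or_pos k with h | h
    · subst h; simp
    · have hne : f 0 - f k ≠ 0 := sub_ne_zero.2 (hf k h).ne'
      rw [hy k h]
      field_simp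
  have hkey : ∀ k, ∑ j ∈ Finset.range (k+1), y j * f j * a ^ (k - j) / (Nat.factorial (k - j))
      = f 0 * y k := by
    intro k
    rw [Finset.sum_range_succ, hGe k]
    simp [Nat.sub_self]
    ring
  -- choice of c and N
  have hbd : IsBoundedUnder (· ≤ ·) atTop f := isBoundedUnder_of ⟨f 0, hfle⟩
  set c : ℝ := (limsup f atTop + f 0 * Real.exp (-a)) / 2 with hc
  have hclt : c * Real.exp a < f 0 := by
    have h1 : c < f 0 * Real.exp (-a) := by rw [hc]; linarith
    have h2 := mul_lt_mul_of_pos_right h1 (Real.exp_pos a)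
    rwa [mul_assoc, ← Real.exp_add, neg_add_cancel, Real.exp_zero, mul_one] at h2
  have hev : ∀ᶠ n in atTop, f n < c :=
    eventually_lt_of_limsup_lt (by rw [hc]; linarith) hbd
  obtain ⟨N, hN⟩ := eventually_atTop.1 hev
  have hcpos : 0 < c := lt_of_le_of_lt (hf0 N) (hN N le_rfl)
  -- the key finite-sum inequality
  have main : ∀ n, f 0 * ∑ k ∈ Finset.range (n+1), y k
      ≤ Real.exp a * ∑ k ∈ Finset.range (n+1), y k * f k := by
    intro n
    have h1 : f 0 * ∑ k ∈ Finset.range (n+1), y k - ∑ k ∈ Finset.range (n+1), y k * f k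
        = ∑ k ∈ Finset.range (n+1), (f 0 - f k) * y k := by
      rw [Finset.mul_sum, ← Finset.sum_sub_distrib]
      exact Finset.sum_congr rfl fun k _ => by ring
    have h2 : ∑ k ∈ Finset.range (n+1), (f 0 - f k) * y k
        ≤ (Real.exp a - 1) * ∑ k ∈ Finset.range (n+1), y k * f k := by
      calc ∑ k ∈ Finset.range (n+1), (f 0 - f k) * y k
          = ∑ k ∈ Finset.range (n+1), ∑ j ∈ Finset.range (n+1),
              (if j < k then y j * f j * a ^ (k - j) / (Nat.factorial (k - j)) else 0) := by
            refine Finset.sum_congr rfl fun k hk => ?_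
            rw [← hGe k]
            have hfilter : (Finset.range (n+1)).filter (fun j => j < k) = Finset.range k := by
              ext j
              simp only [Finset.mem_filter, Finset.mem_range]
              have := Finset.mem_range.1 hk
              omega
            rw [← Finset.sum_filter, hfilter]
        _ = ∑ j ∈ Finset.range (n+1), ∑ k ∈ Finset.range (n+1),
              (if j < k then y j * f j * a ^ (k - j) / (Nat.factorial (k - j)) else 0) :=
            Finset.sum_comm
        _ ≤ ∑ j ∈ Finset.range (n+1), (y j * f j) * (Real.exp a - 1) := by
            refine Finset.sum_le_sum fun j hj => ?_
            have hinner : ∑ k ∈ Finset.range (n+1),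
                (if j < k then y j * f j * a ^ (k - j) / (Nat.factorial (k - j)) else 0)
                = (y j * f j) * ∑ k ∈ Finset.range (n+1),
                  (if j < k then a ^ (k - j) / (Nat.factorial (k - j)) else 0) := by
              rw [Finset.mul_sum]
              refine Finset.sum_congr rfl fun k _ => ?_
              split <;> ring
            rw [hinner]
            refine mul_le_mul_of_nonneg_left ?_ (mul_nonneg (hypos j) (hf0 j))
            have hfilter2 : (Finset.range (n+1)).filter (fun k => j < k)
                = Finset.Ico (j+1) (n+1) := by
              ext k
              simp only [Finset.mem_filter, Finset.mem_range, Finset.mem_Ico]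
              omega
            rw [← Finset.sum_filter, hfilter2, Finset.sum_Ico_eq_sum_range]
            have hcast : ∀ i : ℕ, j + 1 + i - j = i + 1 := fun i => by omega
            have hrw : ∑ i ∈ Finset.range (n + 1 - (j+1)),
                a ^ (j + 1 + i - j) / (Nat.factorial (j + 1 + i - j) : ℝ)
                = ∑ i ∈ Finset.range (n + 1 - (j+1)),
                  a ^ (i+1) / (Nat.factorial (i+1) : ℝ) := by
              refine Finset.sum_congr rfl fun i _ => by rw [hcast i]
            rw [hrw]
            have h := Real.sum_le_exp_of_nonneg ha.le (n + 1 - (j+1) + 1)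
            rw [Finset.sum_range_succ'] at h
            simp only [pow_zero, Nat.factorial_zero, Nat.cast_one, div_one] at h
            linarith
        _ = (Real.exp a - 1) * ∑ j ∈ Finset.range (n+1), y j * f j := by
            rw [← Finset.sum_mul, mul_comm]
    linarith
  have hTb : ∀ n, ∑ k ∈ Finset.range (n+1), y k * f k
      ≤ (∑ k ∈ Finset.range N, y k * f k) + c * ∑ k ∈ Finset.range (n+1), y k := by
    intro n
    rw [Finset.mul_sum]
    calc ∑ k ∈ Finset.range (n+1), y k * f k
        ≤ ∑ k ∈ Finset.range (n+1), ((if k < N then y k * f k else 0) + c * y k) := by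
          refine Finset.sum_le_sum fun k _ => ?_
          by_cases h : k < N
          · simp only [if_pos h]
            nlinarith [mul_nonneg hcpos.le (hypos k)]
          · simp only [if_neg h, zero_add]
            calc y k * f k ≤ y k * c :=
                  mul_le_mul_of_nonneg_left (hN k (le_of_not_gt h)).le (hypos k)
              _ = c * y k := mul_comm _ _
      _ = (∑ k ∈ Finset.range (n+1), if k < N then y k * f k else 0)
          + ∑ k ∈ Finset.range (n+1), c * y k := Finset.sum_add_distrib
      _ ≤ (∑ k ∈ Finset.range N, y k * f k) + ∑ k ∈ Finset.range (n+1), c * y k := by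
          gcongr
          rw [← Finset.sum_filter]
          refine Finset.sum_le_sum_of_subset_of_nonneg ?_ ?_
          · intro k hk
            simp only [Finset.mem_filter, Finset.mem_range] at hk ⊢
            omega
          · intro k _ _
            exact mul_nonneg (hypos k) (hf0 k)
  set C := ∑ k ∈ Finset.range N, y k * f k with hCdef
  set B := Real.exp a * C / (f 0 - c * Real.exp a) with hBdef
  have hSb : ∀ n, ∑ k ∈ Finset.range n, y k ≤ B := by
    intro n
    have hsub : ∑ k ∈ Finset.range n, y k ≤ ∑ k ∈ Finset.range (n+1), y k := by
      refine Finset.sum_le_sum_of_subset_of_nonneg ?_ fun k _ _ => hypos k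
      exact Finset.range_subset_range.2 (Nat.le_succ n)
    have h1 := main n
    have h2 := hTb n
    have h3 := mul_le_mul_of_nonneg_left h2 (Real.exp_pos a).le
    have hpos : 0 < f 0 - c * Real.exp a := by linarith
    rw [hBdef, le_div_iff₀ hpos]
    nlinarith
  have hsum : Summable y := summable_of_sum_range_le hypos hSb
  have hsumf : Summable (fun k => y k * f k) :=
    Summable.of_nonneg_of_le (fun k => mul_nonneg (hypos k) (hf0 k))
      (fun k => mul_le_mul_of_nonneg_left (hfle k) (hypos k)) (hsum.mul_right (f 0))
  -- the tsum identity  f 0 * S = exp a * T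
  have hfact : Summable (fun m : ℕ => a ^ (m+1) / (Nat.factorial (m+1) : ℝ)) :=
    (Real.summable_pow_div_factorial a).comp_injective Nat.succ_injective
  have hexp : Real.exp a = ∑' n : ℕ, a ^ n / (Nat.factorial n : ℝ) := by
    rw [Real.exp_eq_exp_ℝ, NormedSpace.exp_eq_tsum_div]
  have hE1 : ∑' m : ℕ, a ^ (m+1) / (Nat.factorial (m+1) : ℝ) = Real.exp a - 1 := by
    have h0 : ∑' n : ℕ, a ^ n / (Nat.factorial n : ℝ)
        = a ^ 0 / (Nat.factorial 0 : ℝ) + ∑' m : ℕ, a ^ (m+1) / (Nat.factorial (m+1) : ℝ) :=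
      Summable.tsum_eq_zero_add (Real.summable_pow_div_factorial a)
    rw [← hexp] at h0
    simp only [pow_zero, Nat.factorial_zero, Nat.cast_one, div_one] at h0
    linarith
  have hsumF : Summable (fun p : ℕ × ℕ =>
      (y p.1 * f p.1) * (a ^ (p.2+1) / (Nat.factorial (p.2+1) : ℝ))) :=
    hsumf.mul_of_nonneg hfact (fun k => mul_nonneg (hypos k) (hf0 k)) (fun m => by positivity)
  have hFt : ∑' p : ℕ × ℕ, (y p.1 * f p.1) * (a ^ (p.2+1) / (Nat.factorial (p.2+1) : ℝ))
      = (∑' k, y k * f k) * (Real.exp a - 1) := by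
    rw [← Summable.tsum_mul_tsum hsumf hfact hsumF, hE1]
  set H : ℕ × ℕ → ℝ := fun q =>
    if q.2 < q.1 then y q.2 * f q.2 * a ^ (q.1 - q.2) / (Nat.factorial (q.1 - q.2)) else 0
    with hHdef
  set ι : ℕ × ℕ → ℕ × ℕ := fun p => (p.1 + p.2 + 1, p.1) with hιdef
  have hιinj : Function.Injective ι := by
    rintro ⟨p1, p2⟩ ⟨q1, q2⟩ h
    simp only [hιdef, Prod.mk.injEq] at h
    obtain ⟨h1, h2⟩ := h
    simp only [Prod.mk.injEq]
    omega
  have hHι : ∀ p : ℕ × ℕ, H (ι p)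
      = (y p.1 * f p.1) * (a ^ (p.2+1) / (Nat.factorial (p.2+1) : ℝ)) := by
    intro p
    have h1 : p.1 < p.1 + p.2 + 1 := by omega
    have h2 : p.1 + p.2 + 1 - p.1 = p.2 + 1 := by omega
    simp only [hHdef, hιdef, h2, if_pos h1]
    ring
  have hHsupp : ∀ q : ℕ × ℕ, q ∉ Set.range ι → H q = 0 := by
    rintro ⟨q1, q2⟩ hq
    simp only [hHdef]
    split_ifs with h
    · exfalso
      refine hq ⟨(q2, q1 - q2 - 1), ?_⟩
      have he : q2 + (q1 - q2 - 1) + 1 = q1 := by omega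
      simp [hιdef, he]
    · rfl
  have hsumH : Summable H :=
    (hιinj.summable_iff hHsupp).1 (hsumF.congr fun p => (hHι p).symm)
  have hsupp' : Function.support H ⊆ Set.range ι := fun q hq => by
    by_contra h
    exact hq (hHsupp q h)
  have hHt : ∑' q, H q = (∑' k, y k * f k) * (Real.exp a - 1) := by
    rw [← hιinj.tsum_eq hsupp', ← hFt]
    exact tsum_congr fun p => hHι p
  have hfibsum : ∀ k, Summable (fun j => H (k, j)) := by
    intro k
    refine summable_of_ne_finset_zero (s := Finset.range k) ?_
    intro j hj
    simp only [hHdef]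
    rw [if_neg]
    simpa using hj
  have hfib : ∀ k, ∑' j, H (k, j) = (f 0 - f k) * y k := by
    intro k
    have hz : ∀ j ∉ Finset.range k, H (k, j) = 0 := by
      intro j hj
      simp only [hHdef]
      rw [if_neg]
      simpa using hj
    rw [tsum_eq_sum hz, ← hGe k]
    refine Finset.sum_congr rfl fun j hj => ?_
    simp only [hHdef]
    rw [if_pos (Finset.mem_range.1 hj)]
  have hsplit : ∑' q : ℕ × ℕ, H q = ∑' k, (f 0 - f k) * y k := by
    rw [Summable.tsum_prod' hsumH hfibsum]
    exact tsum_congr hfib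
  have hdiff : ∑' k, (f 0 - f k) * y k = f 0 * (∑' k, y k) - ∑' k, y k * f k := by
    calc ∑' k, (f 0 - f k) * y k = ∑' k, (f 0 * y k - y k * f k) :=
          tsum_congr fun k => by ring
      _ = (∑' k, f 0 * y k) - ∑' k, y k * f k := Summable.tsum_sub (hsum.mul_left _) hsumf
      _ = f 0 * (∑' k, y k) - ∑' k, y k * f k := by rw [tsum_mul_left]
  have hID : f 0 * (∑' k, y k) = Real.exp a * ∑' k, y k * f k := by
    have h := hsplit.symm.trans hHt
    rw [hdiff] at h
    linear_combination h
  set S := ∑' k, y k with hSdef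
  set T := ∑' k, y k * f k with hTdef
  have hS1 : 1 ≤ S := by
    have h := Summable.le_tsum hsum 0 (fun j _ => hypos j)
    rwa [hy0] at h
  have hSpos : 0 < S := by linarith
  have hT : T = f 0 * Real.exp (-a) * S := by
    have hea : (0:ℝ) < Real.exp a := Real.exp_pos a
    rw [Real.exp_neg]
    field_simp
    linarith [hID]
  refine ⟨hsum, (fun k => y k / S), ⟨fun k => div_nonneg (hypos k) hSpos.le, ?_, ?_, ?_, ?_⟩, ?_⟩
  · show 0 < y 0 / S
    rw [hy0]
    positivity
  · rw [tsum_div_const]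
    exact div_self hSpos.ne'
  · exact (hsumf.mul_left S⁻¹).congr fun j => by ring
  · intro k
    have hlam : ∑' j, y j / S * f j = f 0 * Real.exp (-a) := by
      have h1 : ∀ j, y j / S * f j = S⁻¹ * (y j * f j) := fun j => by ring
      rw [tsum_congr h1, tsum_mul_left, ← hTdef, hT]
      field_simp
    rw [hlam]
    have h2 : ∀ j ∈ Finset.range (k+1),
        y j / S * f j * Real.exp (-a) * a ^ (k - j) / (Nat.factorial (k - j) : ℝ)
        = (Real.exp (-a) / S) * (y j * f j * a ^ (k - j) / (Nat.factorial (k - j) : ℝ)) :=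
      fun j _ => by ring
    rw [Finset.sum_congr rfl h2, ← Finset.mul_sum, hkey k]
    ring
  · intro x' hx'
    obtain ⟨hnn, h0, hsum1, hsf, heq⟩ := hx'
    have hlam' : ∑' j, x' j * f j = f 0 * Real.exp (-a) := by
      have h := heq 0
      simp only [zero_add, Finset.sum_range_one, Nat.sub_self, pow_zero, Nat.factorial_zero,
        Nat.cast_one, div_one, mul_one] at h
      rw [mul_assoc] at h
      exact (mul_left_cancel₀ h0.ne' h).symm
    have hrec : ∀ k, 1 ≤ k → x' k = (1 / (f 0 - f k)) *
        ∑ j ∈ Finset.range k, x' j * f j * a ^ (k - j) / (Nat.factorial (k - j)) := by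
      intro k hk
      have h := heq k
      rw [hlam', Finset.sum_range_succ] at h
      have hterm : x' k * f k * Real.exp (-a) * a ^ (k - k) / (Nat.factorial (k - k) : ℝ)
          = x' k * f k * Real.exp (-a) := by
        simp [Nat.sub_self]
      rw [hterm] at h
      have hfac : ∑ j ∈ Finset.range k,
          x' j * f j * Real.exp (-a) * a ^ (k - j) / (Nat.factorial (k - j) : ℝ)
          = Real.exp (-a) * ∑ j ∈ Finset.range k,
            x' j * f j * a ^ (k - j) / (Nat.factorial (k - j) : ℝ) := by
        rw [Finset.mul_sum]
        exact Finset.sum_congr rfl fun j _ => by ring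
      rw [hfac] at h
      have hea : (0:ℝ) < Real.exp (-a) := Real.exp_pos _
      have hne : f 0 - f k ≠ 0 := sub_ne_zero.2 (hf k hk).ne'
      have h2 : Real.exp (-a) * ((∑ j ∈ Finset.range k,
          x' j * f j * a ^ (k - j) / (Nat.factorial (k - j) : ℝ)) + x' k * f k)
          = Real.exp (-a) * (x' k * f 0) := by linarith
      have h3 := mul_left_cancel₀ hea.ne' h2
      have hSig : ∑ j ∈ Finset.range k, x' j * f j * a ^ (k - j) / (Nat.factorial (k - j) : ℝ)
          = x' k * (f 0 - f k) := by linear_combination h3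
      rw [hSig]
      field_simp
    have hxy : ∀ k, x' k = x' 0 * y k := by
      intro k
      induction k using Nat.strong_induction_on with
      | _ k ih =>
        rcases Nat.eq_zero_or_pos k with h | h
        · simp [h, hy0]
        · have hsumeq : ∑ j ∈ Finset.range k, x' j * f j * a ^ (k - j) / (Nat.factorial (k - j) : ℝ)
              = x' 0 * ∑ j ∈ Finset.range k, y j * f j * a ^ (k - j) / (Nat.factorial (k - j) : ℝ) := by
            rw [Finset.mul_sum]
            refine Finset.sum_congr rfl fun j hj => ?_
            rw [ih j (Finset.mem_range.1 hj)]
            ring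
          rw [hrec k h, hsumeq, hy k h]
          ring
    have hx0 : x' 0 = 1 / S := by
      have h1 : ∑' k, x' k = x' 0 * S := by
        rw [tsum_congr hxy, tsum_mul_left]
      rw [hsum1] at h1
      rw [eq_div_iff hSpos.ne']
      linarith
    funext k
    rw [hxy k, hx0]
    ring
end

section
/- Let f : ℕ → [0,∞) with f(0) > f(k) for all k ≥ 1 and a > 0, and let (y_k) solve the recurrence (R). If f(0)e^{−a} < liminf_{n→∞} f(n), then ∑_{k≥0} y_k diverges, and no quasispecies associated to f exists. -/
/-!
Write the recurrence as `(f 0 - f k) y k = ∑_{j<k} y j f j a^(k-j)/(k-j)!`. All `y k` are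
positive. Pick `c` with `f 0 e^(-a) < c < liminf f`; then `f ≥ c` from some `N` on, and since
`c e^a > f 0` a finite window of the exponential series already gives
`c ∑_{1 ≤ m ≤ K} a^m/m! ≥ f 0 - c`. Hence the minimum of `y` on `[N, N + K]` bounds every later
`y k` from below, so `y` does not tend to `0`. A quasispecies `x` has mean fitness
`f 0 e^(-a)` (read off the equation at `k = 0`), so it solves the same linear recurrence and
`x = x 0 • y`; summability of `x` would then make `y` summable.
-/

open Finset Filter

open scoped Nat

noncomputable def expWeight (a : ℝ) (m : ℕ) : ℝ := a ^ m / m !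

/-- (R) multiplied by `f 0 - f k`, with the kernel `expWeight a` generalised to `w`. -/
def SatisfiesRecurrence (f w z : ℕ → ℝ) : Prop :=
  ∀ k, 1 ≤ k → (f 0 - f k) * z k = ∑ j ∈ range k, z j * f j * w (k - j)

theorem expWeight_pos {a : ℝ} (ha : 0 < a) (m : ℕ) : 0 < expWeight a m := by
  unfold expWeight; positivity

theorem expWeight_zero (a : ℝ) : expWeight a 0 = 1 := by
  simp [expWeight]

theorem hasSum_expWeight_succ (a : ℝ) :
    HasSum (fun m => expWeight a (m + 1)) (Real.exp a - 1) := by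
  have h : HasSum (expWeight a) (Real.exp a) := by
    rw [Real.exp_eq_exp_ℝ]
    exact NormedSpace.expSeries_div_hasSum_exp a
  simpa [expWeight_zero] using (hasSum_nat_add_iff' 1).2 h

theorem exists_lt_mul_sum_expWeight_succ {a b c : ℝ} (h : b < c * Real.exp a) :
    ∃ K, b - c < c * ∑ m ∈ range K, expWeight a (m + 1) := by
  have hlim := (hasSum_expWeight_succ a).tendsto_sum_nat.const_mul c
  exact (hlim.eventually (eventually_gt_nhds (by linarith))).exists

theorem sum_window_le_sum_range (g w : ℕ → ℝ) (hg : ∀ j, 0 ≤ g j) (hw : ∀ m, 0 ≤ w m)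
    {K k : ℕ} (hKk : K ≤ k) :
    ∑ m ∈ range K, g (k - 1 - m) * w (m + 1) ≤ ∑ j ∈ range k, g j * w (k - j) := by
  calc ∑ m ∈ range K, g (k - 1 - m) * w (m + 1)
      = ∑ m ∈ range K, g (k - 1 - m) * w (k - (k - 1 - m)) :=
        sum_congr rfl fun m hm => by
          rw [show k - (k - 1 - m) = m + 1 by have := mem_range.1 hm; omega]
    _ ≤ ∑ m ∈ range k, g (k - 1 - m) * w (k - (k - 1 - m)) :=
        sum_le_sum_of_subset_of_nonneg (range_subset_range.2 hKk)
          fun m _ _ => mul_nonneg (hg _) (hw _)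
    _ = ∑ j ∈ range k, g j * w (k - j) := sum_range_reflect (fun j => g j * w (k - j)) k

namespace SatisfiesRecurrence

variable {f w y z : ℕ → ℝ}

theorem pos (hR : SatisfiesRecurrence f w y) (hf0 : ∀ k, 0 ≤ f k)
    (hf : ∀ k, 1 ≤ k → f k < f 0) (hw : ∀ m, 0 < w m) (hy0 : y 0 = 1) : ∀ k, 0 < y k := by
  have hf0pos : 0 < f 0 := (hf0 1).trans_lt (hf 1 le_rfl)
  intro k
  induction k using Nat.strong_induction_on with
  | _ k ih =>
  rcases Nat.eq_zero_or_pos k with rfl | hk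
  · rw [hy0]; exact one_pos
  have hsum : 0 < ∑ j ∈ range k, y j * f j * w (k - j) :=
    sum_pos' (fun j hj => mul_nonneg (mul_nonneg (ih j (mem_range.1 hj)).le (hf0 j)) (hw _).le)
      ⟨0, mem_range.2 hk, by rw [hy0, one_mul]; exact mul_pos hf0pos (hw k)⟩
  rw [← hR k hk] at hsum
  exact pos_of_mul_pos_right hsum (sub_pos.2 (hf k hk)).le

theorem eq_mul (hy : SatisfiesRecurrence f w y) (hz : SatisfiesRecurrence f w z)
    (hf : ∀ k, 1 ≤ k → f k ≠ f 0) (hy0 : y 0 = 1) : ∀ k, z k = z 0 * y k := by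
  intro k
  induction k using Nat.strong_induction_on with
  | _ k ih =>
  rcases Nat.eq_zero_or_pos k with rfl | hk
  · rw [hy0, mul_one]
  refine mul_left_cancel₀ (sub_ne_zero.2 (hf k hk).symm) ?_
  calc (f 0 - f k) * z k = ∑ j ∈ range k, z j * f j * w (k - j) := hz k hk
    _ = z 0 * ∑ j ∈ range k, y j * f j * w (k - j) := by
        rw [mul_sum]
        exact sum_congr rfl fun j hj => by rw [ih j (mem_range.1 hj)]; ring
    _ = (f 0 - f k) * (z 0 * y k) := by rw [← hy k hk]; ring

/-- Once `f ≥ c` from `N` on, a lower bound `M` for `y` on the window `[N, N + K]` propagates to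
all `k ≥ N`: each new term collects `K` earlier terms, which together outweigh the gap
`f 0 - f k ≤ f 0 - c`. -/
theorem le_of_le_on_window (hR : SatisfiesRecurrence f w y) (hf0 : ∀ k, 0 ≤ f k)
    (hf : ∀ k, 1 ≤ k → f k < f 0) (hw : ∀ m, 0 ≤ w m) (hy : ∀ k, 0 ≤ y k)
    {N K : ℕ} {c M : ℝ} (hc : ∀ j, N ≤ j → c ≤ f j)
    (hK : f 0 - c ≤ c * ∑ m ∈ range K, w (m + 1))
    (hM : 0 ≤ M) (hMy : ∀ k ∈ Icc N (N + K), M ≤ y k) : ∀ k, N ≤ k → M ≤ y k := by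
  intro k
  induction k using Nat.strong_induction_on with
  | _ k ih =>
  intro hNk
  by_cases hk : k ≤ N + K
  · exact hMy k (mem_Icc.2 ⟨hNk, hk⟩)
  have hwindow : M * (c * ∑ m ∈ range K, w (m + 1))
      ≤ ∑ m ∈ range K, y (k - 1 - m) * f (k - 1 - m) * w (m + 1) := by
    rw [mul_sum, mul_sum]
    refine sum_le_sum fun m hm => ?_
    have hj : N ≤ k - 1 - m := by have := mem_range.1 hm; omega
    have hMc : M * c ≤ y (k - 1 - m) * f (k - 1 - m) :=
      (mul_le_mul_of_nonneg_left (hc _ hj) hM).trans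
        (mul_le_mul_of_nonneg_right (ih _ (by omega) hj) (hf0 _))
    rw [← mul_assoc]
    exact mul_le_mul_of_nonneg_right hMc (hw _)
  refine le_of_mul_le_mul_left ?_ (sub_pos.2 (hf k (by omega)))
  calc (f 0 - f k) * M ≤ (f 0 - c) * M := by gcongr; exact hc k hNk
    _ ≤ M * (c * ∑ m ∈ range K, w (m + 1)) := by rw [mul_comm]; gcongr
    _ ≤ ∑ m ∈ range K, y (k - 1 - m) * f (k - 1 - m) * w (m + 1) := hwindow
    _ ≤ ∑ j ∈ range k, y j * f j * w (k - j) :=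
        sum_window_le_sum_range (fun j => y j * f j) w (fun j => mul_nonneg (hy j) (hf0 j)) hw
          (by omega)
    _ = (f 0 - f k) * y k := (hR k (by omega)).symm

theorem not_summable {a : ℝ} (hR : SatisfiesRecurrence f (expWeight a) y)
    (hf0 : ∀ k, 0 ≤ f k) (hf : ∀ k, 1 ≤ k → f k < f 0) (ha : 0 < a) (hy0 : y 0 = 1)
    (hth : f 0 * Real.exp (-a) < liminf f atTop) : ¬ Summable y := by
  have hy := hR.pos hf0 hf (expWeight_pos ha) hy0
  obtain ⟨c, hc0, hc⟩ := exists_between hth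
  obtain ⟨N, hN⟩ := eventually_atTop.1
    (eventually_lt_of_lt_liminf hc (isBoundedUnder_of ⟨0, hf0⟩))
  have hce : f 0 < c * Real.exp a := by
    rwa [Real.exp_neg, ← div_eq_mul_inv, div_lt_iff₀ (Real.exp_pos a)] at hc0
  obtain ⟨K, hK⟩ := exists_lt_mul_sum_expWeight_succ hce
  have hne : (Icc N (N + K)).Nonempty := nonempty_Icc.2 (by omega)
  set M := (Icc N (N + K)).inf' hne y
  have hM : 0 < M := (lt_inf'_iff hne).2 fun k _ => hy k
  have hMy : ∀ k, N ≤ k → M ≤ y k :=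
    hR.le_of_le_on_window hf0 hf (fun m => (expWeight_pos ha m).le) (fun k => (hy k).le)
      (fun j hj => (hN j hj).le) hK.le hM.le fun k hk => inf'_le y hk
  intro hs
  obtain ⟨k, hMk, hkM⟩ := ((eventually_atTop.2 ⟨N, hMy⟩).and
    (hs.tendsto_atTop_zero.eventually (eventually_lt_nhds hM))).exists
  linarith

end SatisfiesRecurrence

namespace IsQuasispecies

variable {f x : ℕ → ℝ} {a : ℝ}

theorem tsum_mul_eq (hx : IsQuasispecies f a x) : ∑' j, x j * f j = f 0 * Real.exp (-a) := by
  have h := hx.2.2.2.2 0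
  simp only [zero_add, sum_range_one, Nat.sub_self, pow_zero, Nat.factorial_zero, Nat.cast_one,
    div_one] at h
  exact (mul_left_cancel₀ hx.2.1.ne' (by rw [← h]; ring)).symm

theorem satisfiesRecurrence (hx : IsQuasispecies f a x) :
    SatisfiesRecurrence f (expWeight a) x := by
  intro k hk
  have h := hx.2.2.2.2 k
  rw [hx.tsum_mul_eq] at h
  have hsplit : ∑ j ∈ range (k + 1), x j * f j * Real.exp (-a) * a ^ (k - j) / (k - j)!
      = Real.exp (-a) * (∑ j ∈ range k, x j * f j * expWeight a (k - j) + x k * f k) := by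
    rw [sum_range_succ, Nat.sub_self, mul_add, mul_sum]
    simp only [expWeight, pow_zero, Nat.factorial_zero, Nat.cast_one, div_one]
    congr 1
    · exact sum_congr rfl fun j _ => by ring
    · ring
  rw [hsplit] at h
  have := mul_left_cancel₀ (Real.exp_pos (-a)).ne' (h.trans (by ring) :
    Real.exp (-a) * _ = Real.exp (-a) * (f 0 * x k))
  linarith

theorem summable (hx : IsQuasispecies f a x) : Summable x := by
  by_contra hs
  have h := hx.2.2.1
  rw [tsum_eq_zero_of_not_summable hs] at h
  exact zero_ne_one h

end IsQuasispecies

theorem error_threshold_supercritical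
    (f : ℕ → ℝ) (hf0 : ∀ k, 0 ≤ f k) (hf : ∀ k, 1 ≤ k → f k < f 0)
    (a : ℝ) (ha : 0 < a)
    (y : ℕ → ℝ) (hy0 : y 0 = 1)
    (hy : ∀ k, 1 ≤ k →
      y k = (1 / (f 0 - f k)) *
        ∑ j ∈ Finset.range k, y j * f j * a ^ (k - j) / (Nat.factorial (k - j)))
    (hth : f 0 * Real.exp (-a) < liminf f atTop) :
    ¬ Summable y ∧ ¬ ∃ x, IsQuasispecies f a x := by
  have hR : SatisfiesRecurrence f (expWeight a) y := fun k hk => by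
    rw [hy k hk, ← mul_assoc, mul_one_div_cancel (sub_pos.2 (hf k hk)).ne', one_mul]
    exact sum_congr rfl fun j _ => mul_div_assoc _ _ _
  have hdiv := hR.not_summable hf0 hf ha hy0 hth
  refine ⟨hdiv, fun ⟨x, hx⟩ => hdiv ?_⟩
  have hxy := hR.eq_mul hx.satisfiesRecurrence (fun k hk => (hf k hk).ne) hy0
  exact (hx.summable.mul_left (x 0)⁻¹).congr fun k => by
    rw [hxy k, ← mul_assoc, inv_mul_cancel₀ hx.2.1.ne', one_mul]
end

section
/- For the binomial mutation kernel M_H(b,c) = ∑ binom(ℓ−b,k) binom(b,l) q^k (1−q)^{ℓ−b−k} (q/(κ−1))^l (1−q/(κ−1))^{b−l} (sum over k,l ≥ 0 with k ≤ ℓ−b, l ≤ b, k−l = c−b), fix j, k ∈ ℕ, and let ℓ → ∞, q → 0 with ℓq → a > 0. Then M_H(j,k) converges to e^{−a} a^{k−j}/(k−j)! if j ≤ k, and to 0 if j > k. -/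
open Finset Filter

/-- The mutation kernel induced on Hamming classes: for sequence length `ℓ`,
    alphabet size `κ` and per-site mutation probability `q`,
    `MH ℓ κ q b c` is the probability of mutating from class `b` to class `c`. -/
noncomputable def MH (ℓ κ : ℕ) (q : ℝ) (b c : ℕ) : ℝ :=
  ∑ k ∈ Finset.range (ℓ - b + 1), ∑ l ∈ Finset.range (b + 1),
    if (k : ℤ) - (l : ℤ) = (c : ℤ) - (b : ℤ) then
      ((Nat.choose (ℓ - b) k : ℕ) : ℝ) * ((Nat.choose b l : ℕ) : ℝ) *
        q ^ k * (1 - q) ^ (ℓ - b - k) *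
        (q / ((κ : ℝ) - 1)) ^ l * (1 - q / ((κ : ℝ) - 1)) ^ (b - l)
    else 0

/-!
For `ℓ ≥ j + k`, split `M_H(j, k)` according to the number `l ≤ j` of back mutations: the
summand is a `Bin(ℓ - j, q)` probability at `l + k - j` times a `Bin(j, q / (κ - 1))` probability
at `l`. As `q → 0` the second factor tends to `1` for `l = 0` and to `0` otherwise, while by the
Poisson limit theorem (`(ℓ - j) q → a`) the first tends to `e^{-a} a^{l+k-j} / (l+k-j)!`. Only
the `l = 0` summand survives, and it is present iff `j ≤ k`.
-/

noncomputable def binomialTerm (n k : ℕ) (p : ℝ) : ℝ :=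
  n.choose k * p ^ k * (1 - p) ^ (n - k)

lemma tendsto_binomialTerm_zero {α : Type*} {l : Filter α} {p : α → ℝ}
    (hp : Tendsto p l (nhds 0)) (n k : ℕ) :
    Tendsto (fun i => binomialTerm n k (p i)) l (nhds (if k = 0 then 1 else 0)) := by
  have hcont : Continuous (binomialTerm n k) := by unfold binomialTerm; fun_prop
  have hzero : binomialTerm n k 0 = if k = 0 then 1 else 0 := by
    rcases eq_or_ne k 0 with rfl | hk <;> simp [binomialTerm, *]
  exact hzero ▸ (hcont.tendsto 0).comp hp

/-- `l` counts the back mutations among the `b` mismatched sites; the class then moves to `c`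
iff exactly `l + c - b` of the `ℓ - b` matching sites mutate. -/
lemma MH_eq_sum_binomialTerm {ℓ κ b c : ℕ} (q : ℝ) (hbc : b + c ≤ ℓ) :
    MH ℓ κ q b c = ∑ l ∈ range (b + 1), if b ≤ l + c then
      binomialTerm (ℓ - b) (l + c - b) q * binomialTerm b l (q / ((κ : ℝ) - 1)) else 0 := by
  unfold MH binomialTerm
  rw [sum_comm]
  refine sum_congr rfl fun l hl => ?_
  have hlb : l ≤ b := Nat.lt_succ_iff.mp (mem_range.mp hl)
  split_ifs with h
  · rw [sum_eq_single_of_mem (l + c - b) (mem_range.mpr (by omega))]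
    · rw [if_pos (by omega)]; ring
    · intro m _ hm
      rw [if_neg (by omega)]
  · exact sum_eq_zero fun m _ => if_neg (by omega)

section PoissonLimit

variable {α : Type*} {l : Filter α} {N : α → ℕ} {p : α → ℝ} {r : ℝ}

lemma tendsto_zero_of_tendsto_natCast_mul (hN : Tendsto N l atTop)
    (hr : Tendsto (fun i => (N i : ℝ) * p i) l (nhds r)) : Tendsto p l (nhds 0) := by
  have hinv : Tendsto (fun i => ((N i : ℝ))⁻¹) l (nhds 0) :=
    tendsto_inv_atTop_zero.comp (tendsto_natCast_atTop_atTop.comp hN)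
  have h := hr.mul hinv
  rw [mul_zero] at h
  refine h.congr' ?_
  filter_upwards [hN.eventually_ge_atTop 1] with i hi
  field_simp

lemma tendsto_natCast_sub_mul (hN : Tendsto N l atTop)
    (hr : Tendsto (fun i => (N i : ℝ) * p i) l (nhds r)) (c : ℕ) :
    Tendsto (fun i => ((N i - c : ℕ) : ℝ) * p i) l (nhds r) := by
  have hp := tendsto_zero_of_tendsto_natCast_mul hN hr
  refine (by simpa using hr.sub (hp.const_mul (c : ℝ)) : Tendsto _ l (nhds r)).congr' ?_
  filter_upwards [hN.eventually_ge_atTop c] with i hi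
  rw [Nat.cast_sub hi]; ring

lemma tendsto_choose_mul_pow_of_tendsto_natCast_mul (hN : Tendsto N l atTop)
    (hr : Tendsto (fun i => (N i : ℝ) * p i) l (nhds r)) (k : ℕ) :
    Tendsto (fun i => ((N i).choose k : ℝ) * p i ^ k) l (nhds (r ^ k / k.factorial)) := by
  have hprod : Tendsto (fun i => ∏ m ∈ range k, ((N i - m : ℕ) : ℝ) * p i) l (nhds (r ^ k)) := by
    simpa using tendsto_finsetProd (range k) fun m _ => tendsto_natCast_sub_mul hN hr m
  refine (hprod.div_const (k.factorial : ℝ)).congr fun i => ?_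
  -- `k! * choose N k = N (N - 1) ⋯ (N - k + 1)`
  rw [prod_mul_distrib, prod_const, card_range, ← Nat.cast_prod, ← Nat.descFactorial_eq_prod_range,
    Nat.descFactorial_eq_factorial_mul_choose, Nat.cast_mul]
  field_simp

lemma tendsto_one_sub_pow_of_tendsto_natCast_mul (hp : Tendsto p l (nhds 0))
    (hr : Tendsto (fun i => (N i : ℝ) * p i) l (nhds r)) :
    Tendsto (fun i => (1 - p i) ^ N i) l (nhds (Real.exp (-r))) := by
  have habs : Tendsto (fun i => |p i|) l (nhds 0) := by simpa using hp.abs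
  have hsmall : ∀ᶠ i in l, |p i| < 1 / 2 := habs.eventually_lt_const (by norm_num)
  -- `|log (1 - x) + x| ≤ x ^ 2 / (1 - |x|)`, so the error is at most `|N p| * |p| / (1 - |p|)`
  have herr : Tendsto (fun i => (N i : ℝ) * (Real.log (1 - p i) + p i)) l (nhds 0) := by
    have hbound : Tendsto (fun i => |(N i : ℝ) * p i| * (|p i| / (1 - |p i|))) l (nhds 0) := by
      simpa using hr.abs.mul (habs.div (tendsto_const_nhds.sub habs) (by norm_num))
    refine squeeze_zero_norm' ?_ hbound
    filter_upwards [hsmall] with i hi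
    have hlog := Real.abs_log_sub_add_sum_range_le (x := p i) (by linarith) 1
    simp only [range_one, sum_singleton, zero_add, pow_one, Nat.cast_zero, div_one] at hlog
    rw [Real.norm_eq_abs, abs_mul, abs_mul, Nat.abs_cast, add_comm]
    calc (N i : ℝ) * |p i + Real.log (1 - p i)|
        ≤ N i * (|p i| ^ 2 / (1 - |p i|)) := by gcongr
      _ = N i * |p i| * (|p i| / (1 - |p i|)) := by ring
  have hlog : Tendsto (fun i => (N i : ℝ) * Real.log (1 - p i)) l (nhds (-r)) := by
    refine (by simpa using herr.sub hr : Tendsto _ l (nhds (-r))).congr fun i => ?_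
    ring
  refine ((Real.continuous_exp.tendsto _).comp hlog).congr' ?_
  filter_upwards [hsmall] with i hi
  have hpos : 0 < 1 - p i := by linarith [le_abs_self (p i)]
  simp only [Function.comp, ← Real.log_pow, Real.exp_log (pow_pos hpos _)]

/-- `ProbabilityTheory.tendsto_choose_mul_pow_of_tendsto_mul_atTop` along an arbitrary filter;
there the number of trials is the index `n` itself, whereas here it is `ℓ - j`. -/
theorem tendsto_binomialTerm_of_tendsto_natCast_mul (hN : Tendsto N l atTop)
    (hr : Tendsto (fun i => (N i : ℝ) * p i) l (nhds r)) (k : ℕ) :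
    Tendsto (fun i => binomialTerm (N i) k (p i)) l
      (nhds (Real.exp (-r) * r ^ k / k.factorial)) := by
  have hexp := tendsto_one_sub_pow_of_tendsto_natCast_mul (N := fun i => N i - k)
    (tendsto_zero_of_tendsto_natCast_mul hN hr) (tendsto_natCast_sub_mul hN hr k)
  rw [show Real.exp (-r) * r ^ k / k.factorial = r ^ k / k.factorial * Real.exp (-r) by ring]
  exact (tendsto_choose_mul_pow_of_tendsto_natCast_mul hN hr k).mul hexp

end PoissonLimit

theorem mutation_kernel_limit_general
    (κ : ℕ) (a : ℝ) (j k : ℕ)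
    (L : ℕ → ℕ) (q : ℕ → ℝ)
    (hL : Tendsto (fun n => (L n : ℝ)) atTop atTop)
    (hq : Tendsto q atTop (nhds 0))
    (hLq : Tendsto (fun n => (L n : ℝ) * q n) atTop (nhds a)) :
    Tendsto (fun n => MH (L n) κ (q n) j k) atTop
      (nhds (if j ≤ k then Real.exp (-a) * a ^ (k - j) / (Nat.factorial (k - j))
             else 0)) := by
  have hLnat : Tendsto L atTop atTop := tendsto_natCast_atTop_iff.mp hL
  have hN : Tendsto (fun n => L n - j) atTop atTop := (tendsto_sub_atTop_nat j).comp hLnat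
  have hNq := tendsto_natCast_sub_mul hLnat hLq j
  have hterm : ∀ l ∈ range (j + 1), Tendsto (fun n => if j ≤ l + k then
      binomialTerm (L n - j) (l + k - j) (q n) * binomialTerm j l (q n / ((κ : ℝ) - 1)) else 0)
      atTop (nhds (if j ≤ l + k then Real.exp (-a) * a ^ (l + k - j) / (l + k - j).factorial *
        (if l = 0 then 1 else 0) else 0)) := by
    intro l _
    by_cases h : j ≤ l + k
    · simp only [h, if_true]
      exact (tendsto_binomialTerm_of_tendsto_natCast_mul hN hNq _).mul
        (tendsto_binomialTerm_zero (by simpa using hq.div_const ((κ : ℝ) - 1)) j l)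
    · simpa only [h, if_false] using tendsto_const_nhds
  have hsum := tendsto_finsetSum _ hterm
  rw [sum_eq_single_of_mem 0 (mem_range.mpr j.succ_pos) fun l _ hl => by simp [hl]] at hsum
  simp only [zero_add, if_true, mul_one] at hsum
  refine hsum.congr' ?_
  filter_upwards [hLnat.eventually_ge_atTop (j + k)] with n hn
  exact (MH_eq_sum_binomialTerm (q n) hn).symm

theorem mutation_kernel_limit
    (κ : ℕ) (hκ : 2 ≤ κ) (a : ℝ) (ha : 0 < a) (j k : ℕ)
    (L : ℕ → ℕ) (q : ℕ → ℝ)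
    (hq01 : ∀ n, q n ∈ Set.Icc (0 : ℝ) 1)
    (hL : Tendsto (fun n => (L n : ℝ)) atTop atTop)
    (hq : Tendsto q atTop (nhds 0))
    (hLq : Tendsto (fun n => (L n : ℝ) * q n) atTop (nhds a)) :
    Tendsto (fun n => MH (L n) κ (q n) j k) atTop
      (nhds (if j ≤ k then Real.exp (-a) * a ^ (k - j) / (Nat.factorial (k - j))
             else 0)) :=
  mutation_kernel_limit_general κ a j k L q hL hq hLq
end
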